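/- arXiv:1702.01502 — 11 statements merged into one kernel-verified Lean document; each statement's English description precedes it below -/
import Mathlib

section
/- Feshbach projection method, part (i): with H, P, P⊥, T, S and the Feshbach map F as in the context, the operator T is bijective (invertible as a bounded operator on H) if and only if there exists a bounded operator G : H →L[ℂ] H with G = P ∘ G ∘ P, G ∘ F = P and F ∘ G = P (i.e., F is invertible on the range of P). Moreover, if T is bijective with bounded inverse T⁻¹, then the operator G = P ∘ T⁻¹ ∘ P satisfies G ∘ F = P and F ∘ G = P. -/
/-!
Everything except the passage between bijectivity and invertibility of `T` is an identity in
the ring of bounded operators. Since `S` inverts the `P⊥`-block of `T`, the Feshbach map `F` is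
the Schur complement of that block, and it factors through `T` on either side:
`T (P - S T P) = F = (P - P T S) T`. Hence an inverse `T'` of `T` gives the inverse `P T' P` of
`F` on the range of `P`, and conversely an inverse `G` of `F` there gives the inverse
`(P - S T P) G (P - P T S) + S` of `T`. By the open mapping theorem a bijective bounded operator
on a Banach space is a unit of that ring.
-/

section Ring

variable {R : Type*} [Ring R] {p t s : R}

def feshbachMap (p t s : R) : R := p * t * p - p * t * (1 - p) * s * (1 - p) * t * p

lemma IsIdempotentElem.mul_compl_corner_eq_zero (hp : IsIdempotentElem p)
    (hs : s = (1 - p) * s * (1 - p)) : p * s = 0 := by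
  rw [hs, ← mul_assoc, ← mul_assoc, hp.mul_one_sub_self, zero_mul, zero_mul]

lemma IsIdempotentElem.compl_corner_mul_eq_zero (hp : IsIdempotentElem p)
    (hs : s = (1 - p) * s * (1 - p)) : s * p = 0 := by
  rw [hs, mul_assoc, hp.one_sub_mul_self, mul_zero]

lemma one_sub_mul_mul_eq_one_sub (hps : p * s = 0)
    (hs₂ : (1 - p) * t * (1 - p) * s = 1 - p) : (1 - p) * t * s = 1 - p := by
  calc (1 - p) * t * s = (1 - p) * t * (1 - p) * s + (1 - p) * t * (p * s) := by noncomm_ring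
    _ = 1 - p := by rw [hs₂, hps, mul_zero, add_zero]

lemma mul_mul_one_sub_eq_one_sub (hsp : s * p = 0)
    (hs₁ : s * (1 - p) * t * (1 - p) = 1 - p) : s * t * (1 - p) = 1 - p := by
  calc s * t * (1 - p) = s * (1 - p) * t * (1 - p) + s * p * t * (1 - p) := by noncomm_ring
    _ = 1 - p := by rw [hs₁, hsp, zero_mul, zero_mul, add_zero]

lemma feshbachMap_eq (hs : s = (1 - p) * s * (1 - p)) :
    feshbachMap p t s = p * t * p - p * t * s * t * p := by
  rw [feshbachMap]
  conv_rhs => rw [hs]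
  noncomm_ring

lemma mul_feshbachMap (hp : IsIdempotentElem p) : p * feshbachMap p t s = feshbachMap p t s := by
  simp only [feshbachMap, mul_sub, ← mul_assoc, hp.eq]

lemma feshbachMap_mul (hp : IsIdempotentElem p) : feshbachMap p t s * p = feshbachMap p t s := by
  simp only [feshbachMap, sub_mul, mul_assoc, hp.eq]

lemma mul_sub_eq_feshbachMap (hs : s = (1 - p) * s * (1 - p)) (hts : (1 - p) * t * s = 1 - p) :
    t * (p - s * t * p) = feshbachMap p t s := by
  calc t * (p - s * t * p)
      = p * t * p - p * t * s * t * p + ((1 - p) * t * p - (1 - p) * t * s * t * p) := by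
        noncomm_ring
    _ = feshbachMap p t s := by rw [hts, sub_self, add_zero, feshbachMap_eq hs]

lemma sub_mul_eq_feshbachMap (hs : s = (1 - p) * s * (1 - p)) (hst : s * t * (1 - p) = 1 - p) :
    (p - p * t * s) * t = feshbachMap p t s := by
  calc (p - p * t * s) * t
      = p * t * p - p * t * s * t * p + (p * t * (1 - p) - p * t * (s * t * (1 - p))) := by
        noncomm_ring
    _ = feshbachMap p t s := by rw [hst, sub_self, add_zero, feshbachMap_eq hs]

lemma feshbachMap_inverse_of_inverse (hp : IsIdempotentElem p) (hs : s = (1 - p) * s * (1 - p))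
    (hs₁ : s * (1 - p) * t * (1 - p) = 1 - p) (hs₂ : (1 - p) * t * (1 - p) * s = 1 - p)
    {t' : R} (h₁ : t' * t = 1) (h₂ : t * t' = 1) :
    p * t' * p * feshbachMap p t s = p ∧ feshbachMap p t s * (p * t' * p) = p := by
  have hps := hp.mul_compl_corner_eq_zero hs
  have hsp := hp.compl_corner_mul_eq_zero hs
  constructor
  · calc p * t' * p * feshbachMap p t s = p * t' * (t * (p - s * t * p)) := by
          rw [mul_assoc _ p, mul_feshbachMap hp,
            mul_sub_eq_feshbachMap hs (one_sub_mul_mul_eq_one_sub hps hs₂)]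
      _ = p * (t' * t) * p - p * (t' * t) * s * t * p := by noncomm_ring
      _ = p := by rw [h₁, mul_one, hp.eq, hps, zero_mul, zero_mul, sub_zero]
  · calc feshbachMap p t s * (p * t' * p) = (p - p * t * s) * t * t' * p := by
          rw [← mul_assoc, ← mul_assoc, feshbachMap_mul hp,
            sub_mul_eq_feshbachMap hs (mul_mul_one_sub_eq_one_sub hsp hs₁)]
      _ = p * p - p * t * (s * p) := by rw [mul_assoc _ t, h₂]; noncomm_ring
      _ = p := by rw [hp.eq, hsp, mul_zero, sub_zero]

lemma isUnit_of_feshbachMap_inverse (hp : IsIdempotentElem p) (hs : s = (1 - p) * s * (1 - p))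
    (hs₁ : s * (1 - p) * t * (1 - p) = 1 - p) (hs₂ : (1 - p) * t * (1 - p) * s = 1 - p)
    {g : R} (hgF : g * feshbachMap p t s = p) (hFg : feshbachMap p t s * g = p) : IsUnit t := by
  have hts := one_sub_mul_mul_eq_one_sub (hp.mul_compl_corner_eq_zero hs) hs₂
  have hst := mul_mul_one_sub_eq_one_sub (hp.compl_corner_mul_eq_zero hs) hs₁
  refine isUnit_iff_exists.mpr ⟨(p - s * t * p) * g * (p - p * t * s) + s, ?_, ?_⟩
  · calc t * ((p - s * t * p) * g * (p - p * t * s) + s)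
        = t * (p - s * t * p) * g * (p - p * t * s) + t * s := by noncomm_ring
      _ = p * p - p * p * t * s + t * s := by
          rw [mul_sub_eq_feshbachMap hs hts, hFg]; noncomm_ring
      _ = p + (1 - p) * t * s := by rw [hp.eq]; noncomm_ring
      _ = 1 := by rw [hts, add_sub_cancel]
  · calc ((p - s * t * p) * g * (p - p * t * s) + s) * t
        = (p - s * t * p) * (g * ((p - p * t * s) * t)) + s * t := by noncomm_ring
      _ = p * p - s * t * (p * p) + s * t := by
          rw [sub_mul_eq_feshbachMap hs hst, hgF]; noncomm_ring
      _ = p + s * t * (1 - p) := by rw [hp.eq]; noncomm_ring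
      _ = 1 := by rw [hst, add_sub_cancel]

lemma isUnit_iff_exists_feshbachMap_inverse (hp : IsIdempotentElem p)
    (hs : s = (1 - p) * s * (1 - p)) (hs₁ : s * (1 - p) * t * (1 - p) = 1 - p)
    (hs₂ : (1 - p) * t * (1 - p) * s = 1 - p) :
    IsUnit t ↔
      ∃ g, g = p * g * p ∧ g * feshbachMap p t s = p ∧ feshbachMap p t s * g = p := by
  constructor
  · intro ht
    obtain ⟨t', h₂, h₁⟩ := isUnit_iff_exists.mp ht
    refine ⟨p * t' * p, ?_, feshbachMap_inverse_of_inverse hp hs hs₁ hs₂ h₁ h₂⟩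
    rw [show p * (p * t' * p) * p = p * p * t' * (p * p) by noncomm_ring, hp.eq]
  · rintro ⟨g, -, hgF, hFg⟩
    exact isUnit_of_feshbachMap_inverse hp hs hs₁ hs₂ hgF hFg

end Ring

theorem feshbach_part_i_general
    {H : Type*} [NormedAddCommGroup H] [InnerProductSpace ℂ H] [CompleteSpace H]
    (P T S : H →L[ℂ] H)
    (hP2 : P ∘L P = P)
    (hS : S = (1 - P) ∘L S ∘L (1 - P))
    (hS1 : S ∘L ((1 - P) ∘L T ∘L (1 - P)) = 1 - P)
    (hS2 : ((1 - P) ∘L T ∘L (1 - P)) ∘L S = 1 - P)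
    (F : H →L[ℂ] H)
    (hF : F = P ∘L T ∘L P - P ∘L T ∘L (1 - P) ∘L S ∘L (1 - P) ∘L T ∘L P) :
    (Function.Bijective T ↔
      ∃ G : H →L[ℂ] H, G = P ∘L G ∘L P ∧ G ∘L F = P ∧ F ∘L G = P) ∧
    (∀ T' : H →L[ℂ] H, T' ∘L T = 1 → T ∘L T' = 1 →
      (P ∘L T' ∘L P) ∘L F = P ∧ F ∘L (P ∘L T' ∘L P) = P) := by
  simp only [← ContinuousLinearMap.mul_def, ← mul_assoc] at hP2 hS hS1 hS2 hF ⊢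
  obtain rfl : F = feshbachMap P T S := hF
  exact ⟨T.isUnit_iff_bijective.symm.trans (isUnit_iff_exists_feshbachMap_inverse hP2 hS hS1 hS2),
    fun _ h₁ h₂ => feshbachMap_inverse_of_inverse hP2 hS hS1 hS2 h₁ h₂⟩

/-- **Feshbach projection method, part (i).**
`H` is a complex Hilbert space, `P` an orthogonal projection (bounded self-adjoint
idempotent), `P⊥ = 1 - P`, `T` a bounded self-adjoint operator, and `S` a bounded
operator with `S = P⊥ ∘ S ∘ P⊥` which is a two-sided inverse of `P⊥ ∘ T ∘ P⊥` on the
range of `P⊥`.  With the Feshbach map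
`F = P ∘ T ∘ P − P ∘ T ∘ P⊥ ∘ S ∘ P⊥ ∘ T ∘ P`, the operator `T` is bijective iff `F`
is invertible on the range of `P`, i.e. iff there is a bounded operator `G` with
`G = P ∘ G ∘ P`, `G ∘ F = P` and `F ∘ G = P`.  Moreover, if `T` is bijective with
bounded inverse `T⁻¹`, then `G = P ∘ T⁻¹ ∘ P` is such an inverse of `F`. -/
theorem feshbach_part_i
    {H : Type*} [NormedAddCommGroup H] [InnerProductSpace ℂ H] [CompleteSpace H]
    (P T S : H →L[ℂ] H)
    (hP : IsSelfAdjoint P) (hP2 : P ∘L P = P)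
    (hT : IsSelfAdjoint T)
    (hS : S = (1 - P) ∘L S ∘L (1 - P))
    (hS1 : S ∘L ((1 - P) ∘L T ∘L (1 - P)) = 1 - P)
    (hS2 : ((1 - P) ∘L T ∘L (1 - P)) ∘L S = 1 - P)
    (F : H →L[ℂ] H)
    (hF : F = P ∘L T ∘L P - P ∘L T ∘L (1 - P) ∘L S ∘L (1 - P) ∘L T ∘L P) :
    (Function.Bijective T ↔
      ∃ G : H →L[ℂ] H, G = P ∘L G ∘L P ∧ G ∘L F = P ∧ F ∘L G = P) ∧
    (∀ T' : H →L[ℂ] H, T' ∘L T = 1 → T ∘L T' = 1 →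
      (P ∘L T' ∘L P) ∘L F = P ∧ F ∘L (P ∘L T' ∘L P) = P) :=
  feshbach_part_i_general P T S hP2 hS hS1 hS2 F hF
end

section
/- Feshbach projection method, part (ii): with H, P, P⊥, T, S and the Feshbach map F as in the context, if ψ ∈ H satisfies ψ ≠ 0 and T ψ = 0, then P ψ ≠ 0 and F (P ψ) = 0. -/
/-!
Write `Q = 1 - P`. Applying `S ∘ (Q T Q) = Q` to `ψ` gives `Q ψ = S Q T Q ψ`; if `P ψ = 0` then
`Q ψ = ψ`, so `ψ = S Q T ψ = 0`. For the second claim, `F P = P T P - P T Q S Q T P`, and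
substituting `P = 1 - Q` in the last factor and using `S Q T Q = Q` turns this into
`F P = (P - P T Q S Q) T`, which kills every vector annihilated by `T`.
-/

namespace Feshbach

variable {A M : Type*} [Ring A] [AddCommGroup M] [Module A M] {p t s : A}

def map (p t s : A) : A :=
  p * t * p - p * t * (1 - p) * s * (1 - p) * t * p

theorem map_mul_proj (hp : p * p = p) (hs : s * ((1 - p) * t * (1 - p)) = 1 - p) :
    map p t s * p = (p - p * t * (1 - p) * s * (1 - p)) * t := by
  have hq : (1 - p) * (1 - p) = 1 - p := by
    rw [sub_mul, one_mul, mul_sub, mul_one, hp, sub_self, sub_zero]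
  calc map p t s * p
      = p * t * (p * p) - p * t * (1 - p) * s * (1 - p) * t * (p * p) := by
        simp only [map, sub_mul, mul_assoc]
    _ = p * t * p - p * t * (1 - p) * s * (1 - p) * t
          + p * t * (1 - p) * (s * ((1 - p) * t * (1 - p))) := by
        rw [hp]; noncomm_ring
    _ = p * t * p - p * t * (1 - p) * s * (1 - p) * t + p * t * ((1 - p) * (1 - p)) := by
        rw [hs, ← mul_assoc]
    _ = (p - p * t * (1 - p) * s * (1 - p)) * t := by
        rw [hq]; noncomm_ring

theorem map_smul_proj_smul_eq_zero (hp : p * p = p) (hs : s * ((1 - p) * t * (1 - p)) = 1 - p)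
    {x : M} (htx : t • x = 0) : map p t s • p • x = 0 := by
  rw [← mul_smul, map_mul_proj hp hs, mul_smul, htx, smul_zero]

theorem eq_zero_of_smul_eq_zero (hs : s * ((1 - p) * t * (1 - p)) = 1 - p) {x : M}
    (htx : t • x = 0) (hpx : p • x = 0) : x = 0 := by
  have hqx : (1 - p) • x = x := by rw [sub_smul, one_smul, hpx, sub_zero]
  calc x = (s * ((1 - p) * t * (1 - p))) • x := by rw [hs, hqx]
    _ = 0 := by simp only [mul_smul, hqx, htx, smul_zero]

end Feshbach

theorem feshbach_part_ii_general
    {H : Type*} [NormedAddCommGroup H] [InnerProductSpace ℂ H]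
    (P T S : H →L[ℂ] H)
    (hP2 : P ∘L P = P)
    (hS1 : S ∘L ((1 - P) ∘L T ∘L (1 - P)) = 1 - P)
    (F : H →L[ℂ] H)
    (hF : F = P ∘L T ∘L P - P ∘L T ∘L (1 - P) ∘L S ∘L (1 - P) ∘L T ∘L P)
    (ψ : H) (hψ : ψ ≠ 0) (hTψ : T ψ = 0) :
    P ψ ≠ 0 ∧ F (P ψ) = 0 := by
  simp only [← ContinuousLinearMap.mul_def] at hP2 hS1 hF
  have hF' : F = Feshbach.map P T S := by simpa only [Feshbach.map, mul_assoc] using hF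
  simp only [← ContinuousLinearMap.smul_def] at hTψ ⊢
  exact ⟨fun hPψ => hψ (Feshbach.eq_zero_of_smul_eq_zero hS1 hTψ hPψ),
    hF' ▸ Feshbach.map_smul_proj_smul_eq_zero hP2 hS1 hTψ⟩

/-- **Feshbach projection method, part (ii).**
With `H`, `P`, `P⊥ = 1 - P`, `T`, `S` and the Feshbach map
`F = P ∘ T ∘ P − P ∘ T ∘ P⊥ ∘ S ∘ P⊥ ∘ T ∘ P` as in the context:
if `ψ ≠ 0` and `T ψ = 0`, then `P ψ ≠ 0` and `F (P ψ) = 0`. -/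
theorem feshbach_part_ii
    {H : Type*} [NormedAddCommGroup H] [InnerProductSpace ℂ H] [CompleteSpace H]
    (P T S : H →L[ℂ] H)
    (hP : IsSelfAdjoint P) (hP2 : P ∘L P = P)
    (hT : IsSelfAdjoint T)
    (hS : S = (1 - P) ∘L S ∘L (1 - P))
    (hS1 : S ∘L ((1 - P) ∘L T ∘L (1 - P)) = 1 - P)
    (hS2 : ((1 - P) ∘L T ∘L (1 - P)) ∘L S = 1 - P)
    (F : H →L[ℂ] H)
    (hF : F = P ∘L T ∘L P - P ∘L T ∘L (1 - P) ∘L S ∘L (1 - P) ∘L T ∘L P)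
    (ψ : H) (hψ : ψ ≠ 0) (hTψ : T ψ = 0) :
    P ψ ≠ 0 ∧ F (P ψ) = 0 :=
  feshbach_part_ii_general P T S hP2 hS1 F hF ψ hψ hTψ
end

section
/- Feshbach projection method, part (iii): with H, P, P⊥, T, S and the Feshbach map F as in the context, if φ ∈ H satisfies φ ≠ 0, P φ = φ and F φ = 0, then the vector ψ = φ − S (T φ) satisfies ψ ≠ 0 and T ψ = 0. -/
/-! With `ψ := (1 - S T) φ`, the Feshbach map factors as `F = P T (1 - S T) P`, so `F φ = 0`
says `P T ψ = 0`; the inverse relation for `S` makes `(1 - P) T (1 - S T)` vanish identically,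
so also `(1 - P) T ψ = 0`, whence `T ψ = 0`. Finally `P ψ = φ` because `P S = 0`. -/

namespace IsIdempotentElem

variable {R : Type*} [Ring R] {p s : R}

theorem mul_eq_zero_of_eq_compl_corner (hp : IsIdempotentElem p)
    (hs : s = (1 - p) * s * (1 - p)) : p * s = 0 := by
  rw [hs, ← mul_assoc, ← mul_assoc, hp.mul_one_sub_self, zero_mul, zero_mul]

theorem compl_mul_of_eq_compl_corner (hp : IsIdempotentElem p)
    (hs : s = (1 - p) * s * (1 - p)) : (1 - p) * s = s := by
  rw [sub_mul, one_mul, hp.mul_eq_zero_of_eq_compl_corner hs, sub_zero]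

theorem mul_compl_of_eq_compl_corner (hp : IsIdempotentElem p)
    (hs : s = (1 - p) * s * (1 - p)) : s * (1 - p) = s := by
  calc s * (1 - p) = (1 - p) * s * ((1 - p) * (1 - p)) := by rw [← mul_assoc, ← hs]
    _ = s := by rw [hp.one_sub.eq, ← hs]

theorem feshbach_map_eq_mul_one_sub_mul (hp : IsIdempotentElem p) (hs : s = (1 - p) * s * (1 - p)) (t : R) :
    p * t * p - p * t * (1 - p) * s * (1 - p) * t * p = p * t * (1 - s * t) * p := by
  rw [mul_assoc (p * t) (1 - p) s, hp.compl_mul_of_eq_compl_corner hs,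
    mul_assoc (p * t) s (1 - p), hp.mul_compl_of_eq_compl_corner hs]
  noncomm_ring

theorem mul_one_sub_mul_of_eq_compl_corner (hp : IsIdempotentElem p)
    (hs : s = (1 - p) * s * (1 - p)) (t : R) : p * (1 - s * t) = p := by
  rw [mul_sub, mul_one, ← mul_assoc, hp.mul_eq_zero_of_eq_compl_corner hs, zero_mul, sub_zero]

theorem compl_mul_mul_one_sub_mul_eq_zero (hp : IsIdempotentElem p)
    (hs : s = (1 - p) * s * (1 - p)) {t : R} (hst : (1 - p) * t * (1 - p) * s = 1 - p) :
    (1 - p) * t * (1 - s * t) = 0 := by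
  have hts : (1 - p) * t * s = 1 - p := by
    calc (1 - p) * t * s = (1 - p) * t * ((1 - p) * s) := by
          rw [hp.compl_mul_of_eq_compl_corner hs]
      _ = 1 - p := by rw [← mul_assoc, hst]
  calc (1 - p) * t * (1 - s * t) = (1 - p) * t - (1 - p) * t * s * t := by noncomm_ring
    _ = 0 := by rw [hts, sub_self]

end IsIdempotentElem

theorem feshbach_part_iii_general
    {H : Type*} [NormedAddCommGroup H] [InnerProductSpace ℂ H]
    (P T S : H →L[ℂ] H)
    (hP2 : P ∘L P = P)
    (hS : S = (1 - P) ∘L S ∘L (1 - P))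
    (hS2 : ((1 - P) ∘L T ∘L (1 - P)) ∘L S = 1 - P)
    (F : H →L[ℂ] H)
    (hF : F = P ∘L T ∘L P - P ∘L T ∘L (1 - P) ∘L S ∘L (1 - P) ∘L T ∘L P)
    (φ : H) (hφ : φ ≠ 0) (hPφ : P φ = φ) (hFφ : F φ = 0) :
    φ - S (T φ) ≠ 0 ∧ T (φ - S (T φ)) = 0 := by
  have hP : IsIdempotentElem P := hP2
  have hS' : S = (1 - P) * S * (1 - P) := by rw [mul_assoc]; exact hS
  set ψ := φ - S (T φ)
  have hPψ : P ψ = φ := by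
    show (P * (1 - S * T)) φ = φ
    rw [hP.mul_one_sub_mul_of_eq_compl_corner hS', hPφ]
  have hPTψ : P (T ψ) = 0 := by
    have hF' : F = P * T * (1 - S * T) * P := by
      rw [hF, ← hP.feshbach_map_eq_mul_one_sub_mul hS' T]
      rfl
    rw [← hFφ, hF']
    show P (T ((1 - S * T) φ)) = P (T ((1 - S * T) (P φ)))
    rw [hPφ]
  have hQTψ : (1 - P) (T ψ) = 0 := by
    show ((1 - P) * T * (1 - S * T)) φ = 0
    rw [hP.compl_mul_mul_one_sub_mul_eq_zero hS' hS2]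
    rfl
  refine ⟨fun h => hφ (by rw [← hPψ, h, map_zero]), ?_⟩
  calc T ψ = P (T ψ) + (1 - P) (T ψ) := by simp
    _ = 0 := by rw [hPTψ, hQTψ, add_zero]

/-- **Feshbach projection method, part (iii).**
With `H`, `P`, `P⊥ = 1 - P`, `T`, `S` and the Feshbach map
`F = P ∘ T ∘ P − P ∘ T ∘ P⊥ ∘ S ∘ P⊥ ∘ T ∘ P` as in the context:
if `φ ≠ 0`, `P φ = φ` and `F φ = 0`, then `ψ = φ - S (T φ)` satisfies
`ψ ≠ 0` and `T ψ = 0`. -/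
theorem feshbach_part_iii
    {H : Type*} [NormedAddCommGroup H] [InnerProductSpace ℂ H] [CompleteSpace H]
    (P T S : H →L[ℂ] H)
    (hP : IsSelfAdjoint P) (hP2 : P ∘L P = P)
    (hT : IsSelfAdjoint T)
    (hS : S = (1 - P) ∘L S ∘L (1 - P))
    (hS1 : S ∘L ((1 - P) ∘L T ∘L (1 - P)) = 1 - P)
    (hS2 : ((1 - P) ∘L T ∘L (1 - P)) ∘L S = 1 - P)
    (F : H →L[ℂ] H)
    (hF : F = P ∘L T ∘L P - P ∘L T ∘L (1 - P) ∘L S ∘L (1 - P) ∘L T ∘L P)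
    (φ : H) (hφ : φ ≠ 0) (hPφ : P φ = φ) (hFφ : F φ = 0) :
    φ - S (T φ) ≠ 0 ∧ T (φ - S (T φ)) = 0 :=
  feshbach_part_iii_general P T S hP2 hS hS2 F hF φ hφ hPφ hFφ
end

section
/- Feshbach projection method, part (iv): with H, P, P⊥, T, S and the Feshbach map F as in the context, the map ψ ↦ P ψ restricts to a linear bijection from the kernel of T onto the subspace { φ ∈ H : F φ = 0 and P φ = φ } (the kernel of F intersected with the range of P); in particular, these two subspaces have the same dimension (the same Module.rank over ℂ). -/
/-!
Write `Q = 1 - P`. Since `S` lives on the range of `Q` and inverts `Q T Q` there, it absorbs `Q` on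
both sides, so `S T Q = Q = Q T S`. These identities show that `T - T S T` is killed by `Q` on both
sides, hence equals its own compression `P (T - T S T) P`, which is the Feshbach map; moreover
`T (1 - S T) = T - T S T`. Consequently `ψ ↦ P ψ` and `φ ↦ (1 - S T) φ` map `ker T` and
`ker F ∩ range P` into each other, and `(1 - S T) P = 1 - S T`, `P (1 - S T) = P` make them
mutually inverse.
-/

structure IsFeshbachInverse {A : Type*} [Ring A] (P T S : A) : Prop where
  isIdempotentElem : IsIdempotentElem P
  eq_sandwich : S = (1 - P) * S * (1 - P)
  left_inv : S * ((1 - P) * T * (1 - P)) = 1 - P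
  right_inv : ((1 - P) * T * (1 - P)) * S = 1 - P

theorem Module.End.one_sub_mul_apply_mem_ker {R M : Type*} [Ring R] [AddCommGroup M] [Module R M]
    {T S : Module.End R M} {φ : M} (hφ : φ ∈ LinearMap.ker (T - T * S * T)) :
    (1 - S * T) φ ∈ LinearMap.ker T := by
  rwa [LinearMap.mem_ker, ← Module.End.mul_apply,
    show T * (1 - S * T) = T - T * S * T by noncomm_ring]

namespace IsFeshbachInverse

section Ring

variable {A : Type*} [Ring A] {P T S : A}

theorem map {B F : Type*} [Ring B] [FunLike F A B] [RingHomClass F A B]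
    (h : IsFeshbachInverse P T S) (f : F) : IsFeshbachInverse (f P) (f T) (f S) where
  isIdempotentElem := h.isIdempotentElem.map f
  eq_sandwich := by simpa using congrArg f h.eq_sandwich
  left_inv := by simpa using congrArg f h.left_inv
  right_inv := by simpa using congrArg f h.right_inv

theorem one_sub_mul_self (h : IsFeshbachInverse P T S) : (1 - P) * S = S := by
  conv_lhs => rw [h.eq_sandwich]
  rw [← mul_assoc, ← mul_assoc, h.isIdempotentElem.one_sub.eq, ← h.eq_sandwich]

theorem self_mul_one_sub (h : IsFeshbachInverse P T S) : S * (1 - P) = S := by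
  conv_lhs => rw [h.eq_sandwich]
  rw [mul_assoc, h.isIdempotentElem.one_sub.eq, ← h.eq_sandwich]

theorem mul_self_eq_zero (h : IsFeshbachInverse P T S) : P * S = 0 := by
  rw [← h.one_sub_mul_self, ← mul_assoc, h.isIdempotentElem.mul_one_sub_self, zero_mul]

theorem mul_mul_one_sub (h : IsFeshbachInverse P T S) : S * T * (1 - P) = 1 - P := by
  conv_rhs => rw [← h.left_inv, ← mul_assoc, ← mul_assoc, h.self_mul_one_sub]

theorem one_sub_mul_mul (h : IsFeshbachInverse P T S) : (1 - P) * T * S = 1 - P := by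
  conv_rhs => rw [← h.right_inv, mul_assoc, h.one_sub_mul_self]

theorem one_sub_mul_mul_right (h : IsFeshbachInverse P T S) : (1 - S * T) * P = 1 - S * T := by
  have hSTP : S * T * P = S * T - (1 - P) := by
    rw [← h.mul_mul_one_sub]; noncomm_ring
  rw [sub_mul, one_mul, hSTP]; abel

theorem mul_one_sub_mul (h : IsFeshbachInverse P T S) : P * (1 - S * T) = P := by
  rw [mul_sub, mul_one, ← mul_assoc, h.mul_self_eq_zero, zero_mul, sub_zero]

theorem feshbach_eq (h : IsFeshbachInverse P T S) :
    P * T * P - P * T * (1 - P) * S * (1 - P) * T * P = T - T * S * T := by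
  have hleft : (1 - P) * (T - T * S * T) = 0 := by
    rw [mul_sub, ← mul_assoc, ← mul_assoc, h.one_sub_mul_mul, sub_self]
  have hright : (T - T * S * T) * (1 - P) = 0 := by
    rw [sub_mul, mul_assoc, mul_assoc, ← mul_assoc S, h.mul_mul_one_sub, sub_self]
  have hsandwich : P * T * (1 - P) * S * (1 - P) * T * P = P * T * S * T * P := by
    conv_rhs => rw [h.eq_sandwich]
    simp only [mul_assoc]
  calc P * T * P - P * T * (1 - P) * S * (1 - P) * T * P
      = P * (T - T * S * T) * P := by rw [hsandwich]; noncomm_ring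
    _ = (T - T * S * T) - (1 - P) * (T - T * S * T) - P * ((T - T * S * T) * (1 - P)) := by
        noncomm_ring
    _ = T - T * S * T := by rw [hleft, hright, mul_zero, sub_zero, sub_zero]

end Ring

section Module

open LinearMap

variable {R M : Type*} [Ring R] [AddCommGroup M] [Module R M] {P T S : Module.End R M}

theorem apply_mem_ker_inf_ker (h : IsFeshbachInverse P T S) {ψ : M} (hψ : ψ ∈ ker T) :
    P ψ ∈ ker (T - T * S * T) ⊓ ker (P - 1) := by
  rw [mem_ker] at hψ
  have hPψ : (T - T * S * T) (P ψ) = 0 := by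
    rw [← Module.End.mul_apply, show T - T * S * T = T * (1 - S * T) by noncomm_ring, mul_assoc,
      h.one_sub_mul_mul_right]
    simp [hψ]
  refine ⟨hPψ, ?_⟩
  simp [← Module.End.mul_apply, h.isIdempotentElem.eq]

noncomputable def kerEquiv (h : IsFeshbachInverse P T S) :
    ker T ≃ₗ[R] ↥(ker (T - T * S * T) ⊓ ker (P - 1)) :=
  LinearEquiv.ofLinearMap
    ((P ∘ₗ (ker T).subtype).codRestrict _ fun ψ => h.apply_mem_ker_inf_ker ψ.2)
    (((1 - S * T) ∘ₗ Submodule.subtype _).codRestrict _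
      fun φ => Module.End.one_sub_mul_apply_mem_ker (Submodule.mem_inf.mp φ.2).1)
    (LinearMap.ext fun φ => Subtype.ext <| by
      have hPφ : P φ = φ := by simpa [sub_eq_zero] using (Submodule.mem_inf.mp φ.2).2
      change (P * (1 - S * T)) φ = φ
      rw [h.mul_one_sub_mul, hPφ])
    (LinearMap.ext fun ψ => Subtype.ext <| by
      have hTψ : T ψ = 0 := ψ.2
      change ((1 - S * T) * P) ψ = ψ
      simp [h.one_sub_mul_mul_right, hTψ])

@[simp]
theorem coe_kerEquiv_apply (h : IsFeshbachInverse P T S) (ψ : ker T) :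
    (h.kerEquiv ψ : M) = P ψ :=
  rfl

end Module

end IsFeshbachInverse

theorem feshbach_part_iv_general
    {H : Type*} [NormedAddCommGroup H] [InnerProductSpace ℂ H]
    (P T S : H →L[ℂ] H)
    (hP2 : P ∘L P = P)
    (hS : S = (1 - P) ∘L S ∘L (1 - P))
    (hS1 : S ∘L ((1 - P) ∘L T ∘L (1 - P)) = 1 - P)
    (hS2 : ((1 - P) ∘L T ∘L (1 - P)) ∘L S = 1 - P)
    (F : H →L[ℂ] H)
    (hF : F = P ∘L T ∘L P - P ∘L T ∘L (1 - P) ∘L S ∘L (1 - P) ∘L T ∘L P) :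
    (∃ e : ↥(LinearMap.ker (T : H →ₗ[ℂ] H)) ≃ₗ[ℂ]
        ↥(LinearMap.ker (F : H →ₗ[ℂ] H) ⊓ LinearMap.ker ((P - 1 : H →L[ℂ] H) : H →ₗ[ℂ] H)),
      ∀ x : ↥(LinearMap.ker (T : H →ₗ[ℂ] H)), (e x : H) = P (x : H)) ∧
    Module.rank ℂ ↥(LinearMap.ker (T : H →ₗ[ℂ] H)) =
      Module.rank ℂ ↥(LinearMap.ker (F : H →ₗ[ℂ] H) ⊓ LinearMap.ker ((P - 1 : H →L[ℂ] H) : H →ₗ[ℂ] H)) := by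
  have h : IsFeshbachInverse P T S := ⟨hP2, hS, hS1, hS2⟩
  have hF' : (F : H →ₗ[ℂ] H) = T - T * S * T := by
    rw [hF.trans h.feshbach_eq]; rfl
  have hP1 : ((P - 1 : H →L[ℂ] H) : H →ₗ[ℂ] H) = P - 1 := rfl
  have h' := h.map ContinuousLinearMap.toLinearMapRingHom
  rw [hF', hP1]
  exact ⟨⟨h'.kerEquiv, h'.coe_kerEquiv_apply⟩, h'.kerEquiv.rank_eq⟩

/-- **Feshbach projection method, part (iv).**
With `H`, `P`, `P⊥ = 1 - P`, `T`, `S` and the Feshbach map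
`F = P ∘ T ∘ P − P ∘ T ∘ P⊥ ∘ S ∘ P⊥ ∘ T ∘ P` as in the context:
the map `ψ ↦ P ψ` restricts to a linear bijection from `ker T` onto
`ker F ∩ range P = {φ | F φ = 0 ∧ P φ = φ}`; in particular these two subspaces
have the same dimension over `ℂ`. -/
theorem feshbach_part_iv
    {H : Type*} [NormedAddCommGroup H] [InnerProductSpace ℂ H] [CompleteSpace H]
    (P T S : H →L[ℂ] H)
    (hP : IsSelfAdjoint P) (hP2 : P ∘L P = P)
    (hT : IsSelfAdjoint T)
    (hS : S = (1 - P) ∘L S ∘L (1 - P))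
    (hS1 : S ∘L ((1 - P) ∘L T ∘L (1 - P)) = 1 - P)
    (hS2 : ((1 - P) ∘L T ∘L (1 - P)) ∘L S = 1 - P)
    (F : H →L[ℂ] H)
    (hF : F = P ∘L T ∘L P - P ∘L T ∘L (1 - P) ∘L S ∘L (1 - P) ∘L T ∘L P) :
    (∃ e : ↥(LinearMap.ker (T : H →ₗ[ℂ] H)) ≃ₗ[ℂ]
        ↥(LinearMap.ker (F : H →ₗ[ℂ] H) ⊓ LinearMap.ker ((P - 1 : H →L[ℂ] H) : H →ₗ[ℂ] H)),
      ∀ x : ↥(LinearMap.ker (T : H →ₗ[ℂ] H)), (e x : H) = P (x : H)) ∧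
    Module.rank ℂ ↥(LinearMap.ker (T : H →ₗ[ℂ] H)) =
      Module.rank ℂ ↥(LinearMap.ker (F : H →ₗ[ℂ] H) ⊓ LinearMap.ker ((P - 1 : H →L[ℂ] H) : H →ₗ[ℂ] H)) :=
  feshbach_part_iv_general P T S hP2 hS hS1 hS2 F hF
end

section
/- The spectrum of the discrete Laplacian h on ℓ²(ℤ) equals the real interval [0, 4] (viewed as a subset of ℂ). -/
/-!
Writing `S` for the unitary shift `(S f)(n) = f (n + 1)`, we have `h = 2 - S - S⁻¹`, so
`‖h - 2‖ ≤ 2`; since `h` is self-adjoint its spectrum is real, hence contained in `[0, 4]`.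

Conversely, each `x ∈ [0, 4]` equals `2 - ω - ω⁻¹` for some `ω` on the unit circle, and the
plane wave `n ↦ ωⁿ` solves `h u = x u` pointwise. Its truncations to `[-N, N]` have norm
`√(2N + 1)`, while `h u - x u` only lives on the four sites next to `±N` and stays bounded.
These approximate eigenvectors are incompatible with a bounded inverse of `x - h`.
-/

open scoped ENNReal

section Reindex

variable {α β E : Type*} [NormedAddCommGroup E] {p : ℝ≥0∞}

theorem Memℓp.comp_equiv {f : α → E} (hf : Memℓp f p) (e : β ≃ α) : Memℓp (f ∘ e) p := by
  rcases p.trichotomy with rfl | rfl | hp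
  · exact memℓp_zero ((memℓp_zero_iff.1 hf).preimage e.injective.injOn)
  · exact memℓp_infty ((memℓp_infty_iff.1 hf).mono (Set.range_comp_subset_range e fun i => ‖f i‖))
  · exact memℓp_gen (e.summable_iff.2 (hf.summable hp))

namespace lp

def compEquiv (f : lp (fun _ : α => E) p) (e : β ≃ α) : lp (fun _ : β => E) p :=
  ⟨f ∘ e, (lp.memℓp f).comp_equiv e⟩

@[simp]
theorem compEquiv_apply (f : lp (fun _ : α => E) p) (e : β ≃ α) (i : β) :
    compEquiv f e i = f (e i) :=
  rfl

theorem norm_compEquiv (hp : 0 < p.toReal) (f : lp (fun _ : α => E) p) (e : β ≃ α) :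
    ‖compEquiv f e‖ = ‖f‖ := by
  rw [norm_eq_tsum_rpow hp, norm_eq_tsum_rpow hp]
  exact congrArg (· ^ _) (e.tsum_eq fun i => ‖f i‖ ^ p.toReal)

theorem norm_le_sum_of_support_subset [Fact (1 ≤ p)] {f : lp (fun _ : α => E) p}
    {s : Finset α} (hf : ∀ i ∉ s, f i = 0) : ‖f‖ ≤ ∑ i ∈ s, ‖f i‖ := by
  classical
  have hsum : f = ∑ i ∈ s, lp.single p i (f i) := by
    refine lp.ext (funext fun j => ?_)
    rw [lp.coeFn_sum, Finset.sum_apply]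
    by_cases hj : j ∈ s
    · simp [lp.single_apply, Pi.single_apply, hj]
    · simp [lp.single_apply, Pi.single_apply, hj, hf j hj]
  calc ‖f‖ = ‖∑ i ∈ s, lp.single p i (f i)‖ := by rw [← hsum]
    _ ≤ ∑ i ∈ s, ‖lp.single (E := fun _ : α => E) p i (f i)‖ := norm_sum_le s _
    _ = ∑ i ∈ s, ‖f i‖ := by simp only [lp.norm_single (zero_lt_one.trans_le Fact.out)]

end lp

end Reindex

theorem ContinuousLinearMap.mem_spectrum_of_approx_eigen {𝕜 E : Type*}
    [NontriviallyNormedField 𝕜] [NormedAddCommGroup E] [NormedSpace 𝕜 E] {T : E →L[𝕜] E}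
    {z : 𝕜} {M : ℝ} (h : ∀ R : ℝ, ∃ f : E, R ≤ ‖f‖ ∧ ‖T f - z • f‖ ≤ M) :
    z ∈ spectrum 𝕜 T := by
  by_contra hz
  obtain ⟨u, hu⟩ := spectrum.notMem_iff.1 hz
  obtain ⟨f, hRf, hf⟩ := h (‖(↑u⁻¹ : E →L[𝕜] E)‖ * M + 1)
  have hf_eq : (↑u⁻¹ : E →L[𝕜] E) (z • f - T f) = f := by
    have : (u : E →L[𝕜] E) f = z • f - T f := by simp [hu, Algebra.algebraMap_eq_smul_one]
    rw [← this, ← mul_apply_eq_comp, u.inv_mul, one_apply_eq_self]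
  have : ‖f‖ ≤ ‖(↑u⁻¹ : E →L[𝕜] E)‖ * M := calc
    ‖f‖ = ‖(↑u⁻¹ : E →L[𝕜] E) (z • f - T f)‖ := by rw [hf_eq]
    _ ≤ ‖(↑u⁻¹ : E →L[𝕜] E)‖ * ‖z • f - T f‖ := le_opNorm _ _
    _ ≤ _ := by rw [norm_sub_rev]; gcongr
  linarith

theorem IsSelfAdjoint.spectrum_subset_image_Icc {A : Type*} [CStarAlgebra A] {a : A}
    (ha : IsSelfAdjoint a) {c r : ℝ} (hr : ‖a - algebraMap ℂ A c‖ ≤ r) :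
    spectrum ℂ a ⊆ (fun x : ℝ => (x : ℂ)) '' Set.Icc (c - r) (c + r) := by
  nontriviality A
  intro z hz
  have hre := ha.mem_spectrum_eq_re hz
  have hdist : ‖z - c‖ ≤ r := by
    refine (spectrum.norm_le_norm_of_mem ?_).trans hr
    rw [← spectrum.sub_singleton_eq]
    exact Set.sub_mem_sub hz rfl
  rw [hre, ← Complex.ofReal_sub, Complex.norm_real, Real.norm_eq_abs, abs_le] at hdist
  exact ⟨z.re, ⟨by linarith, by linarith⟩, hre.symm⟩

theorem Complex.exists_norm_eq_one_add_inv_eq {c : ℝ} (hc : |c| ≤ 2) :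
    ∃ ω : ℂ, ‖ω‖ = 1 ∧ ω + ω⁻¹ = c := by
  obtain ⟨hc₁, hc₂⟩ := abs_le.1 hc
  refine ⟨exp (Real.arccos (c / 2) * I), by simp [norm_exp], ?_⟩
  rw [← exp_neg, ← neg_mul, ← two_cos, ← ofReal_cos, Real.cos_arccos (by linarith) (by linarith)]
  push_cast
  ring

section TruncatedWave

variable {𝕜 : Type*} [NormedField 𝕜]

noncomputable def truncatedWave (ω : 𝕜) (N : ℕ) : lp (fun _ : ℤ => 𝕜) 2 :=
  ∑ n ∈ Finset.Icc (-N : ℤ) N, lp.single 2 n (ω ^ n)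

theorem truncatedWave_apply (ω : 𝕜) (N : ℕ) (n : ℤ) :
    truncatedWave ω N n = if -N ≤ n ∧ n ≤ N then ω ^ n else 0 := by
  rw [truncatedWave, lp.coeFn_sum, Finset.sum_apply]
  simp [lp.single_apply, Pi.single_apply]

theorem norm_truncatedWave_apply_le {ω : 𝕜} (hω : ‖ω‖ = 1) (N : ℕ) (n : ℤ) :
    ‖truncatedWave ω N n‖ ≤ 1 := by
  rw [truncatedWave_apply]
  split_ifs <;> simp [hω]

theorem norm_truncatedWave_sq {ω : 𝕜} (hω : ‖ω‖ = 1) (N : ℕ) :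
    ‖truncatedWave ω N‖ ^ 2 = 2 * N + 1 := by
  have h := lp.norm_sum_single (p := 2) two_pos (fun n : ℤ => ω ^ n) (Finset.Icc (-N : ℤ) N)
  simp only [ENNReal.toReal_ofNat, Real.rpow_two, norm_zpow, hω, one_zpow, one_pow,
    Finset.sum_const, Int.card_Icc, nsmul_eq_mul, mul_one] at h
  rw [truncatedWave, h, show ((N : ℤ) + 1 - -N).toNat = 2 * N + 1 by omega]
  push_cast
  ring

end TruncatedWave

section DiscreteLaplacian

variable {𝕜 : Type*} [NontriviallyNormedField 𝕜]

def IsDiscreteLaplacian (h : lp (fun _ : ℤ => 𝕜) 2 →L[𝕜] lp (fun _ : ℤ => 𝕜) 2) : Prop :=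
  ∀ f n, h f n = 2 * f n - f (n + 1) - f (n - 1)

variable {h : lp (fun _ : ℤ => 𝕜) 2 →L[𝕜] lp (fun _ : ℤ => 𝕜) 2}

theorem IsDiscreteLaplacian.sub_two_apply (hh : IsDiscreteLaplacian h)
    (f : lp (fun _ : ℤ => 𝕜) 2) :
    (h - algebraMap 𝕜 _ 2) f =
      -lp.compEquiv f (Equiv.addRight 1) - lp.compEquiv f (Equiv.subRight 1) := by
  ext n
  simp only [sub_apply, Algebra.algebraMap_eq_smul_one, smul_apply, one_apply_eq_self,
    lp.coeFn_sub, lp.coeFn_neg, lp.coeFn_smul, Pi.sub_apply, Pi.neg_apply, Pi.smul_apply,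
    smul_eq_mul, hh f n, lp.compEquiv_apply, Equiv.coe_addRight, Equiv.subRight_apply]
  ring

theorem IsDiscreteLaplacian.norm_sub_two_le (hh : IsDiscreteLaplacian h) :
    ‖h - algebraMap 𝕜 _ 2‖ ≤ 2 := by
  refine ContinuousLinearMap.opNorm_le_bound _ zero_le_two fun f => ?_
  rw [hh.sub_two_apply]
  calc _ ≤ ‖lp.compEquiv f (Equiv.addRight 1)‖ + ‖lp.compEquiv f (Equiv.subRight 1)‖ :=
        (norm_sub_le _ _).trans_eq (by rw [norm_neg])
    _ = 2 * ‖f‖ := by rw [lp.norm_compEquiv two_pos, lp.norm_compEquiv two_pos, two_mul]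

theorem IsDiscreteLaplacian.sub_smul_apply (hh : IsDiscreteLaplacian h)
    (f : lp (fun _ : ℤ => 𝕜) 2) (x : 𝕜) (n : ℤ) :
    (h f - x • f) n = (2 - x) * f n - f (n + 1) - f (n - 1) := by
  rw [lp.coeFn_sub, lp.coeFn_smul, Pi.sub_apply, Pi.smul_apply, hh, smul_eq_mul]
  ring

variable {ω x : 𝕜}

-- Away from `±N` the plane wave is either cut off on all three sites or solves the recurrence.
theorem IsDiscreteLaplacian.apply_truncatedWave_sub_smul_apply_eq_zero
    (hh : IsDiscreteLaplacian h) (hω : ‖ω‖ = 1) (hx : ω + ω⁻¹ = 2 - x) (N : ℕ) {n : ℤ}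
    (hn : n ∉ ({-(N : ℤ) - 1, -(N : ℤ), (N : ℤ), (N : ℤ) + 1} : Finset ℤ)) :
    (h (truncatedWave ω N) - x • truncatedWave ω N) n = 0 := by
  have hω₀ : ω ≠ 0 := norm_ne_zero_iff.1 (hω ▸ one_ne_zero)
  simp only [Finset.mem_insert, Finset.mem_singleton, not_or] at hn
  rw [hh.sub_smul_apply, ← hx]
  simp only [truncatedWave_apply]
  by_cases hn' : -N ≤ n ∧ n ≤ N
  · rw [if_pos hn', if_pos (by omega), if_pos (by omega), zpow_add_one₀ hω₀, zpow_sub_one₀ hω₀]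
    ring
  · rw [if_neg hn', if_neg (by omega), if_neg (by omega)]
    ring

theorem IsDiscreteLaplacian.norm_apply_truncatedWave_sub_smul_apply_le
    (hh : IsDiscreteLaplacian h) (hω : ‖ω‖ = 1) (hx : ω + ω⁻¹ = 2 - x) (N : ℕ) (n : ℤ) :
    ‖(h (truncatedWave ω N) - x • truncatedWave ω N) n‖ ≤ 4 := by
  set F := truncatedWave ω N
  have hF := norm_truncatedWave_apply_le hω N
  have hωω : ‖ω + ω⁻¹‖ ≤ 2 := (norm_add_le _ _).trans (by simp [hω]; norm_num)
  rw [hh.sub_smul_apply, ← hx]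
  calc _ ≤ ‖(ω + ω⁻¹) * F n‖ + ‖F (n + 1)‖ + ‖F (n - 1)‖ :=
        (norm_sub_le _ _).trans (by gcongr; exact norm_sub_le _ _)
    _ = ‖ω + ω⁻¹‖ * ‖F n‖ + ‖F (n + 1)‖ + ‖F (n - 1)‖ := by rw [norm_mul]
    _ ≤ 2 * 1 + 1 + 1 := by gcongr <;> exact hF _
    _ = 4 := by norm_num

theorem IsDiscreteLaplacian.norm_apply_truncatedWave_sub_smul_le (hh : IsDiscreteLaplacian h)
    (hω : ‖ω‖ = 1) (hx : ω + ω⁻¹ = 2 - x) (N : ℕ) :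
    ‖h (truncatedWave ω N) - x • truncatedWave ω N‖ ≤ 16 :=
  calc _ ≤ ∑ n ∈ ({-(N : ℤ) - 1, -(N : ℤ), (N : ℤ), (N : ℤ) + 1} : Finset ℤ),
        ‖(h (truncatedWave ω N) - x • truncatedWave ω N) n‖ :=
      lp.norm_le_sum_of_support_subset fun _ ↦
        hh.apply_truncatedWave_sub_smul_apply_eq_zero hω hx N
    _ ≤ ∑ n ∈ ({-(N : ℤ) - 1, -(N : ℤ), (N : ℤ), (N : ℤ) + 1} : Finset ℤ), 4 :=
      Finset.sum_le_sum fun n _ ↦ hh.norm_apply_truncatedWave_sub_smul_apply_le hω hx N n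
    _ ≤ 4 * 4 := by
      rw [Finset.sum_const, nsmul_eq_mul]
      gcongr
      exact_mod_cast Finset.card_le_four
    _ = 16 := by norm_num

end DiscreteLaplacian

section ComplexDiscreteLaplacian

variable {h : lp (fun _ : ℤ => ℂ) 2 →L[ℂ] lp (fun _ : ℤ => ℂ) 2}

theorem IsDiscreteLaplacian.spectrum_subset (hh : IsDiscreteLaplacian h) (hsa : IsSelfAdjoint h) :
    spectrum ℂ h ⊆ (fun x : ℝ => (x : ℂ)) '' Set.Icc 0 4 := by
  convert hsa.spectrum_subset_image_Icc (c := 2) (r := 2) (by simpa using hh.norm_sub_two_le)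
    using 3 <;> norm_num

theorem IsDiscreteLaplacian.ofReal_mem_spectrum (hh : IsDiscreteLaplacian h) {x : ℝ}
    (hx : x ∈ Set.Icc 0 4) : (x : ℂ) ∈ spectrum ℂ h := by
  obtain ⟨ω, hω, hωx⟩ := Complex.exists_norm_eq_one_add_inv_eq (c := 2 - x)
    (abs_le.2 ⟨by linarith [hx.2], by linarith [hx.1]⟩)
  refine ContinuousLinearMap.mem_spectrum_of_approx_eigen (M := 16) fun R => ?_
  obtain ⟨N, hN⟩ := exists_nat_ge (R ^ 2)
  refine ⟨truncatedWave ω N, le_of_sq_le_sq ?_ (norm_nonneg _),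
    hh.norm_apply_truncatedWave_sub_smul_le hω (by exact_mod_cast hωx) N⟩
  rw [norm_truncatedWave_sq hω]
  linarith

end ComplexDiscreteLaplacian

/-- The spectrum of the discrete Laplacian `h` on `ℓ²(ℤ)`, given by
`(h f)(n) = 2 f(n) − f(n+1) − f(n−1)`, equals the real interval `[0, 4]`
viewed as a subset of `ℂ`. -/
theorem spectrum_discrete_laplacian_int
    (h : lp (fun _ : ℤ => ℂ) 2 →L[ℂ] lp (fun _ : ℤ => ℂ) 2)
    (hsa : IsSelfAdjoint h)
    (hh : ∀ f : lp (fun _ : ℤ => ℂ) 2, ∀ n : ℤ,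
      (h f) n = 2 * f n - f (n + 1) - f (n - 1)) :
    spectrum ℂ h = (fun x : ℝ => (x : ℂ)) '' Set.Icc 0 4 :=
  (IsDiscreteLaplacian.spectrum_subset hh hsa).antisymm
    (Set.image_subset_iff.2 fun _ hx => IsDiscreteLaplacian.ofReal_mem_spectrum hh hx)
end

section
/- Let Q be a nonzero real number and let T_Q be the bounded self-adjoint operator on ℓ²(ℤ) given by (T_Q f)(n) = 2 f(n) − f(n+1) − f(n−1) + (if n = 0 then Q · f(0) else 0), i.e., T_Q = h + Q·⟨δ₀, ·⟩δ₀ where δ₀ is the indicator of 0. Then T_Q has exactly one eigenvalue: the set of eigenvalues (the point spectrum) of T_Q equals {2 + √(4 + Q²)} if Q > 0, and equals {2 − √(4 + Q²)} if Q < 0. -/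
/-!
Away from the origin an eigenfunction `f` of `T_Q` with eigenvalue `z` satisfies
`f (n + 1) + f (n - 1) = (2 - z) f n`. Writing `2 - z = r + r⁻¹`, the sequence
`f (n + 1) - r f n` is geometric with ratio `r⁻¹`, so decay at `+∞` forces `f n = f 0 rⁿ`
with `‖r‖ < 1` for `n ≥ 0`, and likewise on the negative half-line; since the two roots
have product `1`, the same root serves both sides and `f n = f 0 r^|n|`. The equation at
the origin then reads `z = 2 + Q - 2r`, i.e. `r² - Q r - 1 = 0`. The two roots
`(Q ± √(4 + Q²)) / 2` of this quadratic are real with product `-1`, and exactly one of them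
lies in the open unit disc; conversely that root gives the eigenfunction `r^|n| ∈ ℓ²`.
-/

open Filter Topology

section Recurrence

variable {𝕜 : Type*}

theorem sub_mul_eq_mul_pow_of_recurrence [CommRing 𝕜] {t r r' : 𝕜} (hsum : r + r' = t)
    (hprod : r * r' = 1) {a : ℕ → 𝕜} (hrec : ∀ n, a (n + 2) = t * a (n + 1) - a n) (n : ℕ) :
    a (n + 1) - r * a n = (a 1 - r * a 0) * r' ^ n := by
  induction n with
  | zero => simp
  | succ n ih =>
    calc a (n + 2) - r * a (n + 1) = r' * (a (n + 1) - r * a n) := by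
          rw [hrec, ← hsum]; linear_combination a n * hprod
      _ = _ := by rw [ih]; ring

variable [NormedField 𝕜]

theorem norm_lt_one_of_tendsto_mul_pow {c r : 𝕜} (hc : c ≠ 0)
    (h : Tendsto (fun n : ℕ => c * r ^ n) atTop (𝓝 0)) : ‖r‖ < 1 := by
  refine tendsto_pow_atTop_nhds_zero_iff_norm_lt_one.mp ?_
  simpa [inv_mul_cancel_left₀ hc] using h.const_mul c⁻¹

theorem eq_mul_pow_of_recurrence_of_tendsto_zero {t r r' : 𝕜} (hsum : r + r' = t)
    (hprod : r * r' = 1) (hr' : 1 ≤ ‖r'‖) {a : ℕ → 𝕜}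
    (hrec : ∀ n, a (n + 2) = t * a (n + 1) - a n) (ha : Tendsto a atTop (𝓝 0)) (n : ℕ) :
    a n = a 0 * r ^ n := by
  have hgeom := sub_mul_eq_mul_pow_of_recurrence hsum hprod hrec
  have hstart : a 1 - r * a 0 = 0 := by
    by_contra hne
    have hdecay : Tendsto (fun n => a (n + 1) - r * a n) atTop (𝓝 0) := by
      simpa using (ha.comp (tendsto_add_atTop_nat 1)).sub (ha.const_mul r)
    exact hr'.not_gt (norm_lt_one_of_tendsto_mul_pow hne (hdecay.congr hgeom))
  induction n with
  | zero => simp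
  | succ n ih =>
    have hstep := hgeom n
    rw [hstart, zero_mul, sub_eq_zero] at hstep
    rw [hstep, ih, pow_succ]; ring

theorem exists_add_eq_mul_eq_one_one_le_norm [IsAlgClosed 𝕜] (t : 𝕜) :
    ∃ r r' : 𝕜, r + r' = t ∧ r * r' = 1 ∧ 1 ≤ ‖r'‖ := by
  obtain ⟨r, hr⟩ := IsAlgClosed.exists_root (Polynomial.X ^ 2 - Polynomial.C t * Polynomial.X + 1)
    (ne_of_eq_of_ne (by compute_degree!) two_ne_zero)
  have hprod : r * (t - r) = 1 := by
    simp only [Polynomial.IsRoot, Polynomial.eval_add, Polynomial.eval_sub, Polynomial.eval_pow,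
      Polynomial.eval_mul, Polynomial.eval_C, Polynomial.eval_X, Polynomial.eval_one] at hr
    linear_combination -hr
  have hnorm : ‖r‖ * ‖t - r‖ = 1 := by rw [← norm_mul, hprod, norm_one]
  by_cases h : 1 ≤ ‖t - r‖
  · exact ⟨r, t - r, by ring, hprod, h⟩
  · refine ⟨t - r, r, by ring, by rw [mul_comm, hprod], ?_⟩
    nlinarith [norm_nonneg r, norm_nonneg (t - r)]

theorem exists_eq_mul_pow_of_recurrence_of_tendsto_zero [IsAlgClosed 𝕜] {t : 𝕜} {a : ℕ → 𝕜}
    (hrec : ∀ n, a (n + 2) = t * a (n + 1) - a n) (ha : Tendsto a atTop (𝓝 0)) :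
    ∃ r : 𝕜, r * (t - r) = 1 ∧ ∀ n, a n = a 0 * r ^ n := by
  obtain ⟨r, r', hsum, hprod, hr'⟩ := exists_add_eq_mul_eq_one_one_le_norm t
  refine ⟨r, by rw [← hsum, add_sub_cancel_left, hprod], ?_⟩
  exact eq_mul_pow_of_recurrence_of_tendsto_zero hsum hprod hr' hrec ha

theorem eq_of_mul_sub_eq_one_of_norm_lt_one {t r s : 𝕜} (hr : r * (t - r) = 1)
    (hs : s * (t - s) = 1) (hr1 : ‖r‖ < 1) (hs1 : ‖s‖ < 1) : s = r := by
  have : (s - r) * (s - (t - r)) = 0 := by linear_combination hr - hs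
  rcases mul_eq_zero.mp this with h | h
  · exact sub_eq_zero.mp h
  · have : ‖r‖ * ‖s‖ = 1 := by rw [← norm_mul, sub_eq_zero.mp h, hr, norm_one]
    nlinarith [norm_nonneg r, norm_nonneg s]

end Recurrence

theorem Memℓp.tendsto_cofinite_zero {α E : Type*} [NormedAddCommGroup E] {p : ENNReal}
    {f : α → E} (hf : Memℓp f p) (hp : 0 < p.toReal) : Tendsto f cofinite (𝓝 0) := by
  rw [tendsto_zero_iff_norm_tendsto_zero]
  have := ((hf.summable hp).tendsto_cofinite_zero).rpow_const (p := p.toReal⁻¹)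
    (Or.inr (inv_nonneg.mpr hp.le))
  rw [Real.zero_rpow (inv_ne_zero hp.ne')] at this
  exact this.congr fun i => Real.rpow_rpow_inv (norm_nonneg _) hp.ne'

theorem memℓp_pow_natAbs {𝕜 : Type*} [NormedField 𝕜] {r : 𝕜} (hr : ‖r‖ < 1) {p : ENNReal}
    (hp : 0 < p.toReal) : Memℓp (fun n : ℤ => r ^ n.natAbs) p := by
  apply memℓp_gen
  have hgeom : Summable fun n : ℕ => (‖r‖ ^ p.toReal) ^ n :=
    summable_geometric_of_lt_one (by positivity) (Real.rpow_lt_one (norm_nonneg r) hr hp)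
  have hterm (n : ℤ) : ‖r ^ n.natAbs‖ ^ p.toReal = (‖r‖ ^ p.toReal) ^ n.natAbs := by
    rw [norm_pow, ← Real.rpow_natCast, ← Real.rpow_natCast, ← Real.rpow_mul (norm_nonneg r),
      ← Real.rpow_mul (norm_nonneg r), mul_comm]
  simp only [hterm]
  exact .of_nat_of_neg (by simpa using hgeom) (by simpa using hgeom)

section DeltaLaplacian

variable {𝕜 : Type*} [NormedField 𝕜]

def deltaLaplacian (Q : 𝕜) (g : ℤ → 𝕜) (n : ℤ) : 𝕜 :=
  2 * g n - g (n + 1) - g (n - 1) + if n = 0 then Q * g 0 else 0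

theorem recurrence_of_deltaLaplacian_eq_smul {Q z : 𝕜} {g : ℤ → 𝕜}
    (h : deltaLaplacian Q g = z • g) {n : ℤ} (hn : n ≠ 0) :
    g (n + 1) = (2 - z) * g n - g (n - 1) := by
  have hn' := congrFun h n
  simp only [deltaLaplacian, if_neg hn, add_zero, Pi.smul_apply, smul_eq_mul] at hn'
  linear_combination -hn'

theorem exists_eq_mul_pow_natAbs_of_deltaLaplacian_eq_smul [IsAlgClosed 𝕜] {Q z : 𝕜}
    {g : ℤ → 𝕜} (hg : Tendsto g cofinite (𝓝 0)) (hg0 : g ≠ 0) (h : deltaLaplacian Q g = z • g) :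
    ∃ r : 𝕜, r * (2 - z - r) = 1 ∧ ‖r‖ < 1 ∧ ∀ n, g n = g 0 * r ^ n.natAbs := by
  have hrec (n : ℤ) (hn : n ≠ 0) := recurrence_of_deltaLaplacian_eq_smul h hn
  have hg_pos : Tendsto (fun m : ℕ => g m) atTop (𝓝 0) :=
    hg.comp (Nat.cofinite_eq_atTop ▸ Nat.cast_injective.tendsto_cofinite)
  have hg_neg : Tendsto (fun m : ℕ => g (-m)) atTop (𝓝 0) :=
    hg.comp (Nat.cofinite_eq_atTop ▸ (neg_injective.comp Nat.cast_injective).tendsto_cofinite)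
  obtain ⟨r, hr, hpos⟩ := exists_eq_mul_pow_of_recurrence_of_tendsto_zero
    (a := fun m : ℕ => g m) (t := 2 - z)
    (fun m => by
      have := hrec (m + 1) (by omega)
      push_cast
      rwa [show (m : ℤ) + 1 + 1 = m + 2 by ring, add_sub_cancel_right] at this)
    hg_pos
  obtain ⟨s, hs, hneg⟩ := exists_eq_mul_pow_of_recurrence_of_tendsto_zero
    (a := fun m : ℕ => g (-m)) (t := 2 - z)
    (fun m => by
      have := hrec (-(m + 1)) (by omega)
      rw [show -((m : ℤ) + 1) + 1 = -m by ring, show -((m : ℤ) + 1) - 1 = -(m + 2) by ring] at this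
      push_cast
      linear_combination this)
    hg_neg
  have hright (n : ℕ) : g n = g 0 * r ^ n := by simpa using hpos n
  have hleft (n : ℕ) : g (-n) = g 0 * s ^ n := by simpa using hneg n
  have hg00 : g 0 ≠ 0 := by
    intro h0
    apply hg0
    funext n
    obtain ⟨m, rfl | rfl⟩ := Int.eq_nat_or_neg n <;> simp [hright, hleft, h0]
  have hr1 : ‖r‖ < 1 := norm_lt_one_of_tendsto_mul_pow hg00 (hg_pos.congr hright)
  have hs1 : ‖s‖ < 1 := norm_lt_one_of_tendsto_mul_pow hg00 (hg_neg.congr hleft)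
  obtain rfl : s = r := eq_of_mul_sub_eq_one_of_norm_lt_one hr hs hr1 hs1
  refine ⟨s, hs, hs1, fun n => ?_⟩
  obtain ⟨m, rfl | rfl⟩ := Int.eq_nat_or_neg n
  · rw [hright, Int.natAbs_natCast]
  · rw [hleft, Int.natAbs_neg, Int.natAbs_natCast]

theorem exists_root_of_deltaLaplacian_eq_smul [IsAlgClosed 𝕜] {Q z : 𝕜} {g : ℤ → 𝕜}
    (hg : Tendsto g cofinite (𝓝 0)) (hg0 : g ≠ 0) (h : deltaLaplacian Q g = z • g) :
    ∃ r : 𝕜, r ^ 2 - Q * r - 1 = 0 ∧ ‖r‖ < 1 ∧ z = 2 + Q - 2 * r := by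
  obtain ⟨r, hr, hr1, hgeom⟩ := exists_eq_mul_pow_natAbs_of_deltaLaplacian_eq_smul hg hg0 h
  have hg00 : g 0 ≠ 0 := fun h0 => hg0 (funext fun n => by rw [hgeom, h0, zero_mul]; rfl)
  have hz : z = 2 + Q - 2 * r := by
    have h0 := congrFun h 0
    simp only [deltaLaplacian, ↓reduceIte, Pi.smul_apply, smul_eq_mul, zero_add, zero_sub,
      hgeom 1, hgeom (-1)] at h0
    refine mul_right_cancel₀ hg00 ?_
    simp only [Int.natAbs_one, Int.natAbs_neg, pow_one] at h0
    linear_combination -h0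
  exact ⟨r, by rw [hz] at hr; linear_combination hr, hr1, hz⟩

theorem deltaLaplacian_pow_natAbs {Q r : 𝕜} (hr : r ^ 2 - Q * r - 1 = 0) :
    deltaLaplacian Q (fun n : ℤ => r ^ n.natAbs) =
      (2 + Q - 2 * r) • fun n : ℤ => r ^ n.natAbs := by
  funext n
  simp only [deltaLaplacian, Pi.smul_apply, smul_eq_mul]
  rcases lt_trichotomy n 0 with hn | rfl | hn
  · obtain ⟨k, rfl⟩ : ∃ k : ℕ, n = -(k + 1) := ⟨(-n - 1).toNat, by omega⟩
    rw [if_neg (by omega), show (-((k : ℤ) + 1)).natAbs = k + 1 by omega,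
      show (-((k : ℤ) + 1) + 1).natAbs = k by omega,
      show (-((k : ℤ) + 1) - 1).natAbs = k + 2 by omega]
    linear_combination r ^ k * hr
  · simp only [Int.natAbs_zero, pow_zero, mul_one, zero_add, zero_sub, Int.natAbs_neg,
      Int.natAbs_one, pow_one, ↓reduceIte]
    ring
  · obtain ⟨k, rfl⟩ : ∃ k : ℕ, n = k + 1 := ⟨(n - 1).toNat, by omega⟩
    rw [if_neg (by omega), show ((k : ℤ) + 1).natAbs = k + 1 by omega,
      show ((k : ℤ) + 1 + 1).natAbs = k + 2 by omega,
      show ((k : ℤ) + 1 - 1).natAbs = k by omega]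
    linear_combination r ^ k * hr

theorem setOf_eigenvalue_eq_of_coe_eq_deltaLaplacian [IsAlgClosed 𝕜] {Q : 𝕜}
    (T : lp (fun _ : ℤ => 𝕜) 2 → lp (fun _ : ℤ => 𝕜) 2) (hT : ∀ f, ⇑(T f) = deltaLaplacian Q f) :
    {z : 𝕜 | ∃ f, f ≠ 0 ∧ T f = z • f} =
      {z | ∃ r : 𝕜, r ^ 2 - Q * r - 1 = 0 ∧ ‖r‖ < 1 ∧ z = 2 + Q - 2 * r} := by
  ext z
  constructor
  · rintro ⟨f, hf, hTf⟩
    refine exists_root_of_deltaLaplacian_eq_smul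
      ((lp.memℓp f).tendsto_cofinite_zero (by norm_num)) (fun h => hf (lp.ext h)) ?_
    rw [← hT, hTf, lp.coeFn_smul]
  · rintro ⟨r, hr, hr1, rfl⟩
    let f : lp (fun _ : ℤ => 𝕜) 2 := ⟨_, memℓp_pow_natAbs hr1 (by norm_num)⟩
    refine ⟨f, fun h => by simpa [f] using congrArg (fun g : lp _ 2 => g 0) h, lp.ext ?_⟩
    rw [hT, lp.coeFn_smul]
    exact deltaLaplacian_pow_natAbs hr

theorem setOf_eigenvalue_eq_singleton_of_coe_eq_deltaLaplacian [IsAlgClosed 𝕜] {Q r₀ : 𝕜}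
    (hr₀ : ∀ r : 𝕜, r ^ 2 - Q * r - 1 = 0 ∧ ‖r‖ < 1 ↔ r = r₀)
    (T : lp (fun _ : ℤ => 𝕜) 2 → lp (fun _ : ℤ => 𝕜) 2) (hT : ∀ f, ⇑(T f) = deltaLaplacian Q f) :
    {z : 𝕜 | ∃ f, f ≠ 0 ∧ T f = z • f} = {2 + Q - 2 * r₀} := by
  rw [setOf_eigenvalue_eq_of_coe_eq_deltaLaplacian T hT]
  ext z
  simp only [Set.mem_ofPred_eq, Set.mem_singleton_iff, ← and_assoc, hr₀, exists_eq_left]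

end DeltaLaplacian

theorem sq_sub_mul_sub_one_eq_zero_and_norm_lt_one_iff_of_pos {Q : ℝ} (hQ : 0 < Q) (r : ℂ) :
    r ^ 2 - Q * r - 1 = 0 ∧ ‖r‖ < 1 ↔ r = ((Q - √(4 + Q ^ 2)) / 2 : ℝ) := by
  set w := √(4 + Q ^ 2)
  have hw : w ^ 2 = 4 + Q ^ 2 := Real.sq_sqrt (by positivity)
  have hQw : Q < w := by nlinarith [Real.sqrt_nonneg (4 + Q ^ 2)]
  have hwQ : w < Q + 2 := by nlinarith [Real.sqrt_nonneg (4 + Q ^ 2)]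
  have hroots : r ^ 2 - Q * r - 1 = (r - ((Q - w) / 2 : ℝ)) * (r - ((Q + w) / 2 : ℝ)) := by
    have hwc : (w : ℂ) ^ 2 = 4 + (Q : ℂ) ^ 2 := by exact_mod_cast hw
    push_cast
    linear_combination hwc / 4
  rw [hroots, mul_eq_zero, sub_eq_zero, sub_eq_zero]
  constructor
  · rintro ⟨rfl | rfl, hr1⟩
    · rfl
    · rw [Complex.norm_real, Real.norm_eq_abs] at hr1
      nlinarith [le_abs_self ((Q + w) / 2)]
  · rintro rfl
    refine ⟨Or.inl rfl, ?_⟩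
    rw [Complex.norm_real, Real.norm_eq_abs, abs_lt]
    constructor <;> linarith

theorem sq_sub_mul_sub_one_eq_zero_and_norm_lt_one_iff_of_neg {Q : ℝ} (hQ : Q < 0) (r : ℂ) :
    r ^ 2 - Q * r - 1 = 0 ∧ ‖r‖ < 1 ↔ r = ((Q + √(4 + Q ^ 2)) / 2 : ℝ) := by
  have := sq_sub_mul_sub_one_eq_zero_and_norm_lt_one_iff_of_pos (neg_pos.mpr hQ) (-r)
  rw [norm_neg, neg_sq, neg_sq, neg_eq_iff_eq_neg] at this
  convert this using 3 <;> push_cast <;> ring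

theorem point_spectrum_laplacian_delta_potential_general
    (Q : ℝ)
    (T : lp (fun _ : ℤ => ℂ) 2 →L[ℂ] lp (fun _ : ℤ => ℂ) 2)
    (hT : ∀ f : lp (fun _ : ℤ => ℂ) 2, ∀ n : ℤ,
      (T f) n = 2 * f n - f (n + 1) - f (n - 1)
        + (if n = 0 then (Q : ℂ) * f 0 else 0)) :
    (0 < Q →
      {z : ℂ | ∃ f : lp (fun _ : ℤ => ℂ) 2, f ≠ 0 ∧ T f = z • f}
        = {((2 + Real.sqrt (4 + Q ^ 2) : ℝ) : ℂ)}) ∧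
    (Q < 0 →
      {z : ℂ | ∃ f : lp (fun _ : ℤ => ℂ) 2, f ≠ 0 ∧ T f = z • f}
        = {((2 - Real.sqrt (4 + Q ^ 2) : ℝ) : ℂ)}) := by
  have hT' (f : lp (fun _ : ℤ => ℂ) 2) : ⇑(T f) = deltaLaplacian (Q : ℂ) f := funext (hT f)
  refine ⟨fun hQ => ?_, fun hQ => ?_⟩
  · rw [setOf_eigenvalue_eq_singleton_of_coe_eq_deltaLaplacian
      (sq_sub_mul_sub_one_eq_zero_and_norm_lt_one_iff_of_pos hQ) T hT']
    congr 1
    push_cast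
    ring
  · rw [setOf_eigenvalue_eq_singleton_of_coe_eq_deltaLaplacian
      (sq_sub_mul_sub_one_eq_zero_and_norm_lt_one_iff_of_neg hQ) T hT']
    congr 1
    push_cast
    ring

/-- Let `Q ≠ 0` be real and let `T_Q` be the bounded self-adjoint operator on `ℓ²(ℤ)`
given by `(T_Q f)(n) = 2 f(n) − f(n+1) − f(n−1) + (if n = 0 then Q f(0) else 0)`,
i.e. `T_Q = h + Q ⟨δ₀, ·⟩ δ₀`.  Then `T_Q` has exactly one eigenvalue: its point
spectrum equals `{2 + √(4 + Q²)}` if `Q > 0`, and `{2 − √(4 + Q²)}` if `Q < 0`. -/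
theorem point_spectrum_laplacian_delta_potential
    (Q : ℝ) (hQ : Q ≠ 0)
    (T : lp (fun _ : ℤ => ℂ) 2 →L[ℂ] lp (fun _ : ℤ => ℂ) 2)
    (hsa : IsSelfAdjoint T)
    (hT : ∀ f : lp (fun _ : ℤ => ℂ) 2, ∀ n : ℤ,
      (T f) n = 2 * f n - f (n + 1) - f (n - 1)
        + (if n = 0 then (Q : ℂ) * f 0 else 0)) :
    (0 < Q →
      {z : ℂ | ∃ f : lp (fun _ : ℤ => ℂ) 2, f ≠ 0 ∧ T f = z • f}
        = {((2 + Real.sqrt (4 + Q ^ 2) : ℝ) : ℂ)}) ∧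
    (Q < 0 →
      {z : ℂ | ∃ f : lp (fun _ : ℤ => ℂ) 2, f ≠ 0 ∧ T f = z • f}
        = {((2 - Real.sqrt (4 + Q ^ 2) : ℝ) : ℂ)}) :=
  point_spectrum_laplacian_delta_potential_general Q T hT
end

section
/- Let p ≥ 2 be a natural number, let V = (ℤ × ℤ) ⊕ (ℤ × Fin p), and let Δ be the bounded self-adjoint operator on ℓ²(V) (the Laplacian of the square lattice with p pendant edges attached at each vertex of ℤ × {0}) defined by: for u = inl (m₁, m₂) with m₂ ≠ 0, (Δ F)(u) = 4 F(inl(m₁,m₂)) − F(inl(m₁+1,m₂)) − F(inl(m₁−1,m₂)) − F(inl(m₁,m₂+1)) − F(inl(m₁,m₂−1)); for u = inl (m₁, 0), (Δ F)(u) = (4 + p) F(inl(m₁,0)) − F(inl(m₁+1,0)) − F(inl(m₁−1,0)) − F(inl(m₁,1)) − F(inl(m₁,−1)) − Σ_{j < p} F(inr(m₁,j)); and for u = inr (n, j), (Δ F)(u) = F(inr(n,j)) − F(inl(n,0)). Then 1 is an eigenvalue of Δ of infinite multiplicity, i.e., the eigenspace {F ∈ ℓ²(V) : Δ F = F} is an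 infinite-dimensional subspace. -/
/-!
For two leaves `j ≠ j'` of the star at `(n, 0)`, the vector `δ_(n,j) - δ_(n,j')` is an
eigenvector of `Δ` for the eigenvalue `1`: it vanishes on the lattice, and at the hub `(n, 0)`
its two leaf contributions cancel. These vectors, one per `n : ℤ`, are linearly independent
since evaluation at the leaves `(k, j)` is a biorthogonal family of functionals.
-/

open Sum

theorem LinearIndependent.of_biorthogonal {R M ι : Type*} [Semiring R] [AddCommMonoid M]
    [Module R M] [DecidableEq ι] (v : ι → M) (φ : ι → M →ₗ[R] R)
    (h : ∀ i k, φ k (v i) = (Pi.single i 1 : ι → R) k) : LinearIndependent R v := by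
  have hv : LinearMap.pi φ ∘ v = fun i ↦ Pi.single i 1 := by
    ext
    simp [h]
  exact .of_comp (LinearMap.pi φ) (hv ▸ Pi.linearIndependent_single_one ι R)

local notation "ℓ²[" p "]" => lp (fun _ : (ℤ × ℤ) ⊕ (ℤ × Fin p) => ℂ) 2

noncomputable def leafDipole {p : ℕ} (n : ℤ) (j j' : Fin p) : ℓ²[p] :=
  lp.single 2 (inr (n, j)) 1 - lp.single 2 (inr (n, j')) 1

section leafDipole

variable {p : ℕ}

theorem leafDipole_apply_inl (n : ℤ) (j j' : Fin p) (x : ℤ × ℤ) :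
    leafDipole n j j' (inl x) = 0 := by
  simp [leafDipole]

theorem leafDipole_sum_leaves (n : ℤ) (j j' : Fin p) (k : ℤ) :
    ∑ i, leafDipole n j j' (inr (k, i)) = 0 := by
  by_cases hk : k = n
  · subst hk
    simp [leafDipole, Pi.single_apply, Finset.sum_sub_distrib]
  · simp [leafDipole, hk]

theorem leafDipole_apply_inr_left {j j' : Fin p} (hj : j ≠ j') (n k : ℤ) :
    leafDipole n j j' (inr (k, j)) = (Pi.single n 1 : ℤ → ℂ) k := by
  by_cases hk : k = n
  · subst hk
    simp [leafDipole, hj]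
  · simp [leafDipole, hk]

theorem linearIndependent_leafDipole {j j' : Fin p} (hj : j ≠ j') :
    LinearIndependent ℂ fun n : ℤ ↦ leafDipole n j j' :=
  .of_biorthogonal _ (fun k ↦ lp.evalₗ _ 2 (inr (k, j)))
    fun n k ↦ leafDipole_apply_inr_left hj n k

end leafDipole

structure IsPendantStarLaplacian (p : ℕ) (Δ : ℓ²[p] →L[ℂ] ℓ²[p]) : Prop where
  apply_inl_of_ne_zero : ∀ F : ℓ²[p], ∀ m₁ m₂ : ℤ, m₂ ≠ 0 →
    (Δ F) (inl (m₁, m₂)) = 4 * F (inl (m₁, m₂)) - F (inl (m₁ + 1, m₂))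
      - F (inl (m₁ - 1, m₂)) - F (inl (m₁, m₂ + 1)) - F (inl (m₁, m₂ - 1))
  apply_inl_zero : ∀ F : ℓ²[p], ∀ m₁ : ℤ,
    (Δ F) (inl (m₁, 0)) = (4 + (p : ℂ)) * F (inl (m₁, 0)) - F (inl (m₁ + 1, 0))
      - F (inl (m₁ - 1, 0)) - F (inl (m₁, 1)) - F (inl (m₁, -1))
      - ∑ j : Fin p, F (inr (m₁, j))
  apply_inr : ∀ F : ℓ²[p], ∀ n : ℤ, ∀ j : Fin p,
    (Δ F) (inr (n, j)) = F (inr (n, j)) - F (inl (n, 0))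

namespace IsPendantStarLaplacian

variable {p : ℕ} {Δ : ℓ²[p] →L[ℂ] ℓ²[p]}

theorem apply_eq_self_of_inl_eq_zero_of_sum_eq_zero (hΔ : IsPendantStarLaplacian p Δ) (F : ℓ²[p])
    (h_inl : ∀ x, F (inl x) = 0) (h_sum : ∀ n, ∑ j, F (inr (n, j)) = 0) : Δ F = F := by
  ext (⟨m₁, m₂⟩ | ⟨n, j⟩)
  · by_cases hm₂ : m₂ = 0
    · subst hm₂
      simp [hΔ.apply_inl_zero, h_inl, h_sum]
    · simp [hΔ.apply_inl_of_ne_zero F m₁ m₂ hm₂, h_inl]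
  · simp [hΔ.apply_inr, h_inl]

theorem leafDipole_mem_ker_sub_one (hΔ : IsPendantStarLaplacian p Δ) (n : ℤ) (j j' : Fin p) :
    leafDipole n j j' ∈ LinearMap.ker (Δ - 1 : _ →L[ℂ] _).toLinearMap := by
  rw [LinearMap.mem_ker, ContinuousLinearMap.coe_coe, sub_apply, one_apply_eq_self, sub_eq_zero]
  exact hΔ.apply_eq_self_of_inl_eq_zero_of_sum_eq_zero _
    (leafDipole_apply_inl n j j') (leafDipole_sum_leaves n j j')

end IsPendantStarLaplacian

theorem flat_band_pendant_star_guide_general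
    (p : ℕ) (hp : 2 ≤ p)
    (Δ : lp (fun _ : (ℤ × ℤ) ⊕ (ℤ × Fin p) => ℂ) 2 →L[ℂ]
         lp (fun _ : (ℤ × ℤ) ⊕ (ℤ × Fin p) => ℂ) 2)
    (h1 : ∀ F : lp (fun _ : (ℤ × ℤ) ⊕ (ℤ × Fin p) => ℂ) 2, ∀ m₁ m₂ : ℤ, m₂ ≠ 0 →
      (Δ F) (inl (m₁, m₂)) = 4 * F (inl (m₁, m₂)) - F (inl (m₁ + 1, m₂))
        - F (inl (m₁ - 1, m₂)) - F (inl (m₁, m₂ + 1)) - F (inl (m₁, m₂ - 1)))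
    (h2 : ∀ F : lp (fun _ : (ℤ × ℤ) ⊕ (ℤ × Fin p) => ℂ) 2, ∀ m₁ : ℤ,
      (Δ F) (inl (m₁, 0)) = (4 + (p : ℂ)) * F (inl (m₁, 0)) - F (inl (m₁ + 1, 0))
        - F (inl (m₁ - 1, 0)) - F (inl (m₁, 1)) - F (inl (m₁, -1))
        - ∑ j : Fin p, F (inr (m₁, j)))
    (h3 : ∀ F : lp (fun _ : (ℤ × ℤ) ⊕ (ℤ × Fin p) => ℂ) 2, ∀ n : ℤ, ∀ j : Fin p,
      (Δ F) (inr (n, j)) = F (inr (n, j)) - F (inl (n, 0))) :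
    ¬ FiniteDimensional ℂ ↥(LinearMap.ker (Δ - 1 : _ →L[ℂ] _).toLinearMap) := by
  intro hfin
  have hΔ : IsPendantStarLaplacian p Δ := ⟨h1, h2, h3⟩
  let j₀ : Fin p := ⟨0, by omega⟩
  let j₁ : Fin p := ⟨1, by omega⟩
  have hj : j₀ ≠ j₁ := by simp [j₀, j₁, Fin.ext_iff]
  have h_indep : LinearIndependent ℂ fun n : ℤ ↦
      (⟨_, hΔ.leafDipole_mem_ker_sub_one n j₀ j₁⟩ :
        LinearMap.ker (Δ - 1 : _ →L[ℂ] _).toLinearMap) :=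
    .of_comp (Submodule.subtype _) (linearIndependent_leafDipole hj)
  exact Module.Finite.not_linearIndependent_of_infinite _ h_indep

/-- Let `p ≥ 2`, `V = (ℤ × ℤ) ⊕ (ℤ × Fin p)`, and let `Δ` be the Laplacian of the
square lattice with `p` pendant edges attached at each vertex of `ℤ × {0}` (defined
pointwise as in the hypotheses).  Then `1` is an eigenvalue of `Δ` of infinite
multiplicity: the eigenspace `{F : Δ F = F}` is infinite-dimensional. -/
theorem flat_band_pendant_star_guide
    (p : ℕ) (hp : 2 ≤ p)
    (Δ : lp (fun _ : (ℤ × ℤ) ⊕ (ℤ × Fin p) => ℂ) 2 →L[ℂ]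
         lp (fun _ : (ℤ × ℤ) ⊕ (ℤ × Fin p) => ℂ) 2)
    (hsa : IsSelfAdjoint Δ)
    (h1 : ∀ F : lp (fun _ : (ℤ × ℤ) ⊕ (ℤ × Fin p) => ℂ) 2, ∀ m₁ m₂ : ℤ, m₂ ≠ 0 →
      (Δ F) (inl (m₁, m₂)) = 4 * F (inl (m₁, m₂)) - F (inl (m₁ + 1, m₂))
        - F (inl (m₁ - 1, m₂)) - F (inl (m₁, m₂ + 1)) - F (inl (m₁, m₂ - 1)))
    (h2 : ∀ F : lp (fun _ : (ℤ × ℤ) ⊕ (ℤ × Fin p) => ℂ) 2, ∀ m₁ : ℤ,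
      (Δ F) (inl (m₁, 0)) = (4 + (p : ℂ)) * F (inl (m₁, 0)) - F (inl (m₁ + 1, 0))
        - F (inl (m₁ - 1, 0)) - F (inl (m₁, 1)) - F (inl (m₁, -1))
        - ∑ j : Fin p, F (inr (m₁, j)))
    (h3 : ∀ F : lp (fun _ : (ℤ × ℤ) ⊕ (ℤ × Fin p) => ℂ) 2, ∀ n : ℤ, ∀ j : Fin p,
      (Δ F) (inr (n, j)) = F (inr (n, j)) - F (inl (n, 0))) :
    ¬ FiniteDimensional ℂ ↥(LinearMap.ker (Δ - 1 : _ →L[ℂ] _).toLinearMap) :=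
  flat_band_pendant_star_guide_general p hp Δ h1 h2 h3
end

section
/- Let p ≥ 1 be a natural number, define Q(λ) = p·λ/(λ − 1) for real λ > 1, and let S_p = { λ ∈ ℝ : λ > 1 and 2 ≤ λ − √(4 + Q(λ)²) ≤ 6 }. Then there exist real numbers a ≤ b with S_p = [a, b], the length satisfies b − a < 4, and [a, b] ⊆ [p + 3, p + 8]. Moreover, the length of S_p tends to 4: (sSup S_p − sInf S_p) → 4 as p → ∞. -/
/-!
With `Q = guide p` and `g = band p`, i.e. `Q(x) = p x / (x - 1)` and `g(x) = x - √(4 + Q(x)²)`: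
for `p > 0`, `Q` is positive and strictly decreasing on `(1, ∞)`, hence `g` is strictly increasing
and continuous there; as `g (p + 3) < 2` and `g (p + 8) > 6`, `S_p = [a, b]` with `g a = 2`,
`g b = 6`. Since `g b - g a = (b - a) + (√(4 + Q(a)²) - √(4 + Q(b)²))` and
`u ↦ √(4 + u²)` is `1`-Lipschitz,
`0 < 4 - (b - a) ≤ Q a - Q b = p (b - a) / ((a - 1)(b - 1)) ≤ 4 / p`.
-/

open Filter Set

lemma StrictMonoOn.inter_preimage_Icc {α β : Type*} [LinearOrder α] [Preorder β] {f : α → β}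
    {s : Set α} [s.OrdConnected] {a b : α} (hf : StrictMonoOn f s) (ha : a ∈ s) (hb : b ∈ s) :
    s ∩ f ⁻¹' Icc (f a) (f b) = Icc a b := by
  ext x
  constructor
  · rintro ⟨hx, hax, hxb⟩
    exact ⟨(hf.le_iff_le ha hx).1 hax, (hf.le_iff_le hx hb).1 hxb⟩
  · rintro ⟨hax, hxb⟩
    have hx : x ∈ s := Set.Icc_subset s ha hb ⟨hax, hxb⟩
    exact ⟨hx, (hf.le_iff_le ha hx).2 hax, (hf.le_iff_le hx hb).2 hxb⟩

lemma Real.sqrt_add_sq_sub_sqrt_add_sq_le {c u v : ℝ} (hc : 0 ≤ c) (hvu : v ≤ u) :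
    √(c + u ^ 2) - √(c + v ^ 2) ≤ u - v := by
  have hv : v ≤ √(c + v ^ 2) := (le_abs_self v).trans <| by
    rw [← Real.sqrt_sq_eq_abs]
    exact Real.sqrt_le_sqrt (by linarith)
  rw [sub_le_iff_le_add, Real.sqrt_le_iff]
  constructor
  · linarith [Real.sqrt_nonneg (c + v ^ 2)]
  · nlinarith [Real.sq_sqrt (show 0 ≤ c + v ^ 2 by positivity)]

noncomputable section

namespace GuidedBand

def guide (p x : ℝ) : ℝ := p * x / (x - 1)

def band (p x : ℝ) : ℝ := x - √(4 + guide p x ^ 2)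

def bandSet (p : ℝ) : Set ℝ := Ioi 1 ∩ band p ⁻¹' Icc 2 6

variable {p a b : ℝ}

lemma guide_sub_guide (ha : a ≠ 1) (hb : b ≠ 1) :
    guide p a - guide p b = p * (b - a) / ((a - 1) * (b - 1)) := by
  unfold guide
  field_simp [sub_ne_zero.2 ha, sub_ne_zero.2 hb]
  ring

lemma guide_pos (hp : 0 < p) (ha : 1 < a) : 0 < guide p a :=
  div_pos (by positivity) (by linarith)

lemma strictAntiOn_guide (hp : 0 < p) : StrictAntiOn (guide p) (Ioi 1) := by
  intro a (ha : 1 < a) b (hb : 1 < b) hab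
  rw [← sub_pos, guide_sub_guide ha.ne' hb.ne']
  exact div_pos (by nlinarith) (by nlinarith)

lemma strictAntiOn_sqrt_four_add_guide_sq (hp : 0 < p) :
    StrictAntiOn (fun x => √(4 + guide p x ^ 2)) (Ioi 1) := by
  intro a ha b (hb : 1 < b) hab
  have hQ := strictAntiOn_guide hp ha hb hab
  have hQb := guide_pos hp hb
  exact Real.sqrt_lt_sqrt (by positivity) (by nlinarith)

lemma strictMonoOn_band (hp : 0 < p) : StrictMonoOn (band p) (Ioi 1) := by
  intro a ha b hb hab
  have := strictAntiOn_sqrt_four_add_guide_sq hp ha hb hab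
  simp only [band] at this ⊢
  linarith

lemma continuousOn_band : ContinuousOn (band p) (Ioi 1) := by
  have hden : ∀ x ∈ Ioi (1 : ℝ), x - 1 ≠ 0 := fun x (hx : 1 < x) => by linarith
  unfold band guide
  fun_prop (disch := assumption)

lemma band_lt_two (hp : 0 < p) : band p (p + 3) < 2 := by
  have hlt : p + 1 < √(4 + guide p (p + 3) ^ 2) := by
    apply Real.lt_sqrt_of_sq_lt
    rw [guide, div_pow, ← sub_lt_iff_lt_add', lt_div_iff₀ (by nlinarith)]
    nlinarith
  unfold band
  linarith

lemma six_lt_band (hp : 0 < p) : 6 < band p (p + 8) := by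
  have hlt : √(4 + guide p (p + 8) ^ 2) < p + 2 := by
    rw [Real.sqrt_lt' (by positivity), guide, div_pow, ← lt_sub_iff_add_lt',
      div_lt_iff₀ (by nlinarith)]
    nlinarith
  unfold band
  linarith

lemma sub_lt_band_sub_band (hp : 0 < p) (ha : 1 < a) (hab : a < b) :
    b - a < band p b - band p a := by
  have := strictAntiOn_sqrt_four_add_guide_sq hp ha (ha.trans hab : 1 < b) hab
  simp only [band] at this ⊢
  linarith

lemma band_sub_band_le (hp : 0 < p) (ha : 1 < a) (hab : a ≤ b) :
    band p b - band p a ≤ b - a + p * (b - a) / ((a - 1) * (b - 1)) := by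
  have hb : 1 < b := ha.trans_le hab
  have hQ : guide p b ≤ guide p a := (strictAntiOn_guide hp).antitoneOn ha hb hab
  have := Real.sqrt_add_sq_sub_sqrt_add_sq_le (by norm_num : (0 : ℝ) ≤ 4) hQ
  rw [guide_sub_guide ha.ne' hb.ne'] at this
  unfold band
  linarith

lemma exists_band_eq (hp : 0 < p) {c : ℝ} (hc : c ∈ Icc (2 : ℝ) 6) :
    ∃ x ∈ Ioo (p + 3) (p + 8), band p x = c :=
  intermediate_value_Ioo (by linarith)
    (continuousOn_band.mono fun x hx => show 1 < x by linarith [hx.1])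
    ⟨(band_lt_two hp).trans_le hc.1, hc.2.trans_lt (six_lt_band hp)⟩

theorem exists_bandSet_eq_Icc (hp : 0 < p) :
    ∃ a b, a < b ∧ bandSet p = Icc a b ∧ p + 3 < a ∧ b < p + 8 ∧
      4 - 4 / p ≤ b - a ∧ b - a < 4 := by
  obtain ⟨a, ⟨ha, -⟩, hga⟩ := exists_band_eq hp (c := 2) (by norm_num)
  obtain ⟨b, ⟨hb, hb'⟩, hgb⟩ := exists_band_eq hp (c := 6) (by norm_num)
  have ha1 : 1 < a := by linarith
  have hb1 : 1 < b := by linarith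
  have hab : a < b := ((strictMonoOn_band hp).lt_iff_lt ha1 hb1).1 (by norm_num [hga, hgb])
  have hS := (strictMonoOn_band hp).inter_preimage_Icc ha1 hb1
  rw [hga, hgb] at hS
  have hupper := sub_lt_band_sub_band hp ha1 hab
  have hlower := band_sub_band_le hp ha1 hab.le
  have herror : p * (b - a) / ((a - 1) * (b - 1)) ≤ 4 / p := by
    calc p * (b - a) / ((a - 1) * (b - 1)) ≤ p * 4 / (p * p) :=
          div_le_div₀ (by positivity) (by nlinarith) (by positivity) (by nlinarith)
      _ = 4 / p := by field_simp
  exact ⟨a, b, hab, hS, ha, hb', by linarith, by linarith⟩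

lemma tendsto_sSup_sub_sInf_bandSet :
    Tendsto (fun p : ℕ => sSup (bandSet p) - sInf (bandSet p)) atTop (nhds 4) := by
  have hsqueeze : ∀ᶠ p : ℕ in atTop,
      4 - 4 / (p : ℝ) ≤ sSup (bandSet p) - sInf (bandSet p) ∧
        sSup (bandSet p) - sInf (bandSet p) ≤ 4 := by
    filter_upwards [eventually_gt_atTop 0] with p hp
    obtain ⟨a, b, hab, hS, -, -, hlow, hlen⟩ := exists_bandSet_eq_Icc (p := p) (by positivity)
    rw [hS, csSup_Icc hab.le, csInf_Icc hab.le]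
    exact ⟨hlow, hlen.le⟩
  refine tendsto_of_tendsto_of_tendsto_of_le_of_le' ?_ tendsto_const_nhds
    (hsqueeze.mono fun _ h => h.1) (hsqueeze.mono fun _ h => h.2)
  simpa using tendsto_const_nhds.sub (tendsto_const_div_atTop_nhds_zero_nat (4 : ℝ))

end GuidedBand

end

/-- For `p ≥ 1` let `Q(λ) = pλ/(λ−1)` for `λ > 1` and
`S_p = {λ > 1 : 2 ≤ λ − √(4 + Q(λ)²) ≤ 6}`.  Then `S_p` is a closed interval
`[a, b]` with `b − a < 4` and `[a, b] ⊆ [p+3, p+8]`; moreover the length of `S_p`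
tends to `4` as `p → ∞`. -/
theorem guided_band_star_guide :
    (∀ p : ℕ, 1 ≤ p → ∃ a b : ℝ, a ≤ b ∧
      {x : ℝ | 1 < x ∧ 2 ≤ x - Real.sqrt (4 + ((p : ℝ) * x / (x - 1)) ^ 2) ∧
        x - Real.sqrt (4 + ((p : ℝ) * x / (x - 1)) ^ 2) ≤ 6} = Set.Icc a b ∧
      b - a < 4 ∧ Set.Icc a b ⊆ Set.Icc ((p : ℝ) + 3) ((p : ℝ) + 8)) ∧
    Tendsto (fun p : ℕ =>
      sSup {x : ℝ | 1 < x ∧ 2 ≤ x - Real.sqrt (4 + ((p : ℝ) * x / (x - 1)) ^ 2) ∧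
          x - Real.sqrt (4 + ((p : ℝ) * x / (x - 1)) ^ 2) ≤ 6}
        - sInf {x : ℝ | 1 < x ∧ 2 ≤ x - Real.sqrt (4 + ((p : ℝ) * x / (x - 1)) ^ 2) ∧
          x - Real.sqrt (4 + ((p : ℝ) * x / (x - 1)) ^ 2) ≤ 6})
      atTop (nhds 4) := by
  refine ⟨fun p hp => ?_, GuidedBand.tendsto_sSup_sub_sInf_bandSet⟩
  obtain ⟨a, b, hab, hS, ha, hb, -, hlen⟩ :=
    GuidedBand.exists_bandSet_eq_Icc (p := p) (by positivity)
  exact ⟨a, b, hab.le, hS, hlen, Icc_subset_Icc ha.le hb.le⟩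
end

section
/- Let s ≥ 1 be a natural number, let V = (ℤ × ℤ) ⊕ (ℤ × Fin 2), and let Δ be the bounded self-adjoint operator on ℓ²(V) (the Laplacian of the square lattice with two s-fold multiple pendant edges attached at each vertex of ℤ × {0}) defined by: for u = inl (m₁, m₂) with m₂ ≠ 0, (Δ F)(u) = 4 F(inl(m₁,m₂)) − F(inl(m₁+1,m₂)) − F(inl(m₁−1,m₂)) − F(inl(m₁,m₂+1)) − F(inl(m₁,m₂−1)); for u = inl (m₁, 0), (Δ F)(u) = (4 + 2s) F(inl(m₁,0)) − F(inl(m₁+1,0)) − F(inl(m₁−1,0)) − F(inl(m₁,1)) − F(inl(m₁,−1)) − s·F(inr(m₁,0)) − s·F(inr(m₁,1)); and for u = inr (n, j), (Δ F)(u) = s·F(inr(n,j)) − s·F(inl(n,0)). Then s is an eigenvalue of Δ of infinite multiplicity, i.e., the eigenspace {F ∈ ℓ²(V) : Δ F = s F} is an infinite-dimensional subspace. -/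
/-!
For each `n`, the function equal to `1` and `-1` on the two pendant vertices over `(n, 0)` and
to `0` elsewhere vanishes on the lattice and has zero sum at the root `(n, 0)`, so `Δ` acts on it
as multiplication by `s`. These eigenvectors have disjoint supports, hence are orthogonal, and
they form an infinite linearly independent family in the eigenspace.
-/

open Sum

theorem Submodule.not_finiteDimensional_of_linearIndependent {K M ι : Type*} [DivisionRing K]
    [AddCommGroup M] [Module K M] [Infinite ι] {p : Submodule K M} {v : ι → M}
    (hv : LinearIndependent K v) (hp : ∀ i, v i ∈ p) : ¬FiniteDimensional K p := fun _ =>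
  Module.Finite.not_linearIndependent_of_infinite _
    (LinearIndependent.of_comp p.subtype (v := fun i => (⟨v i, hp i⟩ : p)) hv)

local notation "ℓ²V" => lp (fun _ : (ℤ × ℤ) ⊕ (ℤ × Fin 2) => ℂ) 2

noncomputable def pendantDipole (n : ℤ) : ℓ²V :=
  lp.single 2 (inr (n, 0)) 1 - lp.single 2 (inr (n, 1)) 1

@[simp]
lemma pendantDipole_apply_inl (n : ℤ) (x : ℤ × ℤ) : pendantDipole n (inl x) = 0 := by
  simp [pendantDipole, lp.single_apply]

@[simp]
lemma pendantDipole_apply_inr_zero (n k : ℤ) :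
    pendantDipole n (inr (k, 0)) = if k = n then 1 else 0 := by
  simp [pendantDipole, lp.single_apply, Pi.single_apply]

@[simp]
lemma pendantDipole_apply_inr_one (n k : ℤ) :
    pendantDipole n (inr (k, 1)) = -pendantDipole n (inr (k, 0)) := by
  simp [pendantDipole, lp.single_apply, Pi.single_apply]

lemma pendantDipole_ne_zero (n : ℤ) : pendantDipole n ≠ 0 := fun h => by
  simpa [h] using pendantDipole_apply_inr_zero n n

lemma inner_pendantDipole_of_ne {n m : ℤ} (h : n ≠ m) :
    inner ℂ (pendantDipole n) (pendantDipole m) = 0 := by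
  rw [pendantDipole, inner_sub_left, lp.inner_single_left, lp.inner_single_left,
    pendantDipole_apply_inr_one]
  simp [h]

lemma pendantDipole_linearIndependent : LinearIndependent ℂ pendantDipole :=
  linearIndependent_of_ne_zero_of_inner_eq_zero pendantDipole_ne_zero
    fun _ _ => inner_pendantDipole_of_ne

theorem flat_band_double_mandarin_guide_general
    (s : ℕ)
    (Δ : lp (fun _ : (ℤ × ℤ) ⊕ (ℤ × Fin 2) => ℂ) 2 →L[ℂ]
         lp (fun _ : (ℤ × ℤ) ⊕ (ℤ × Fin 2) => ℂ) 2)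
    (h1 : ∀ F : lp (fun _ : (ℤ × ℤ) ⊕ (ℤ × Fin 2) => ℂ) 2, ∀ m₁ m₂ : ℤ, m₂ ≠ 0 →
      (Δ F) (inl (m₁, m₂)) = 4 * F (inl (m₁, m₂)) - F (inl (m₁ + 1, m₂))
        - F (inl (m₁ - 1, m₂)) - F (inl (m₁, m₂ + 1)) - F (inl (m₁, m₂ - 1)))
    (h2 : ∀ F : lp (fun _ : (ℤ × ℤ) ⊕ (ℤ × Fin 2) => ℂ) 2, ∀ m₁ : ℤ,
      (Δ F) (inl (m₁, 0)) = (4 + 2 * (s : ℂ)) * F (inl (m₁, 0)) - F (inl (m₁ + 1, 0))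
        - F (inl (m₁ - 1, 0)) - F (inl (m₁, 1)) - F (inl (m₁, -1))
        - (s : ℂ) * F (inr (m₁, 0)) - (s : ℂ) * F (inr (m₁, 1)))
    (h3 : ∀ F : lp (fun _ : (ℤ × ℤ) ⊕ (ℤ × Fin 2) => ℂ) 2, ∀ n : ℤ, ∀ j : Fin 2,
      (Δ F) (inr (n, j)) = (s : ℂ) * F (inr (n, j)) - (s : ℂ) * F (inl (n, 0))) :
    ¬ FiniteDimensional ℂ
      ↥(LinearMap.ker (Δ - (s : ℂ) • (1 : lp (fun _ : (ℤ × ℤ) ⊕ (ℤ × Fin 2) => ℂ) 2 →L[ℂ]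
          lp (fun _ : (ℤ × ℤ) ⊕ (ℤ × Fin 2) => ℂ) 2)).toLinearMap) := by
  refine Submodule.not_finiteDimensional_of_linearIndependent
    pendantDipole_linearIndependent fun n => ?_
  rw [LinearMap.mem_ker, ContinuousLinearMap.coe_coe, sub_apply, sub_eq_zero]
  ext (⟨m₁, m₂⟩ | ⟨k, j⟩)
  · obtain rfl | hm₂ := eq_or_ne m₂ 0
    · simp [h2]
    · simp [h1 _ _ _ hm₂]
  · simp [h3]

/-- Let `s ≥ 1`, `V = (ℤ × ℤ) ⊕ (ℤ × Fin 2)`, and let `Δ` be the Laplacian of the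
square lattice with two `s`-fold multiple pendant edges attached at each vertex of
`ℤ × {0}` (defined pointwise as in the hypotheses).  Then `s` is an eigenvalue of `Δ`
of infinite multiplicity: the eigenspace `{F : Δ F = s F}` is infinite-dimensional. -/
theorem flat_band_double_mandarin_guide
    (s : ℕ) (hs : 1 ≤ s)
    (Δ : lp (fun _ : (ℤ × ℤ) ⊕ (ℤ × Fin 2) => ℂ) 2 →L[ℂ]
         lp (fun _ : (ℤ × ℤ) ⊕ (ℤ × Fin 2) => ℂ) 2)
    (hsa : IsSelfAdjoint Δ)
    (h1 : ∀ F : lp (fun _ : (ℤ × ℤ) ⊕ (ℤ × Fin 2) => ℂ) 2, ∀ m₁ m₂ : ℤ, m₂ ≠ 0 →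
      (Δ F) (inl (m₁, m₂)) = 4 * F (inl (m₁, m₂)) - F (inl (m₁ + 1, m₂))
        - F (inl (m₁ - 1, m₂)) - F (inl (m₁, m₂ + 1)) - F (inl (m₁, m₂ - 1)))
    (h2 : ∀ F : lp (fun _ : (ℤ × ℤ) ⊕ (ℤ × Fin 2) => ℂ) 2, ∀ m₁ : ℤ,
      (Δ F) (inl (m₁, 0)) = (4 + 2 * (s : ℂ)) * F (inl (m₁, 0)) - F (inl (m₁ + 1, 0))
        - F (inl (m₁ - 1, 0)) - F (inl (m₁, 1)) - F (inl (m₁, -1))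
        - (s : ℂ) * F (inr (m₁, 0)) - (s : ℂ) * F (inr (m₁, 1)))
    (h3 : ∀ F : lp (fun _ : (ℤ × ℤ) ⊕ (ℤ × Fin 2) => ℂ) 2, ∀ n : ℤ, ∀ j : Fin 2,
      (Δ F) (inr (n, j)) = (s : ℂ) * F (inr (n, j)) - (s : ℂ) * F (inl (n, 0))) :
    ¬ FiniteDimensional ℂ
      ↥(LinearMap.ker (Δ - (s : ℂ) • (1 : lp (fun _ : (ℤ × ℤ) ⊕ (ℤ × Fin 2) => ℂ) 2 →L[ℂ]
          lp (fun _ : (ℤ × ℤ) ⊕ (ℤ × Fin 2) => ℂ) 2)).toLinearMap) :=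
  flat_band_double_mandarin_guide_general s Δ h1 h2 h3
end

section
/- For every natural number p ≥ 1, the cubic equation λ³ − 6λ² + (9 − p²)·λ − 4 = 0 has exactly one real solution λ in the interval [p + 3, p + 4]; in particular, h(p+3) = −4 < 0 and h(p+4) = 2p² + 9p > 0, where h(λ) = λ³ − 6λ² + (9 − p²)·λ − 4. -/
/-! On `[p + 3, ∞)` the derivative of `h` is at least `2p² + 6p ≥ 0`, so `h` is strictly
increasing there; as `h(p + 3) = -4 < 0 ≤ h(p + 4)`, the intermediate value theorem gives exactly
one root in `[p + 3, p + 4]`. -/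

open Set

theorem existsUnique_eq_of_strictMonoOn_Icc {α δ : Type*} [ConditionallyCompleteLinearOrder α]
    [TopologicalSpace α] [OrderTopology α] [DenselyOrdered α] [LinearOrder δ]
    [TopologicalSpace δ] [OrderClosedTopology δ] {f : α → δ} {a b : α} {c : δ} (hab : a ≤ b)
    (hf : ContinuousOn f (Icc a b)) (hmono : StrictMonoOn f (Icc a b)) (ha : f a ≤ c)
    (hb : c ≤ f b) : ∃! x, x ∈ Icc a b ∧ f x = c := by
  obtain ⟨x, hx, hfx⟩ := intermediate_value_Icc hab hf ⟨ha, hb⟩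
  exact ⟨x, ⟨hx, hfx⟩, fun y ⟨hy, hfy⟩ => hmono.injOn hy hx (hfy.trans hfx.symm)⟩

def guidedCubic (p x : ℝ) : ℝ := x ^ 3 - 6 * x ^ 2 + (9 - p ^ 2) * x - 4

theorem hasDerivAt_guidedCubic (p x : ℝ) :
    HasDerivAt (guidedCubic p) (3 * x ^ 2 - 12 * x + (9 - p ^ 2)) x := by
  have h := (((hasDerivAt_pow 3 x).sub ((hasDerivAt_pow 2 x).const_mul 6)).add
    ((hasDerivAt_id x).const_mul (9 - p ^ 2))).sub_const 4
  exact h.congr_deriv (by norm_num; ring)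

theorem continuous_guidedCubic (p : ℝ) : Continuous (guidedCubic p) := by
  unfold guidedCubic
  fun_prop

theorem strictMonoOn_guidedCubic {p : ℝ} (hp : 0 ≤ p) :
    StrictMonoOn (guidedCubic p) (Ici (p + 3)) := by
  refine strictMonoOn_of_deriv_pos (convex_Ici _) (continuous_guidedCubic p).continuousOn ?_
  intro x hx
  rw [interior_Ici, mem_Ioi] at hx
  rw [(hasDerivAt_guidedCubic p x).deriv]
  -- `3(x - 2)² - 3 - p²` exceeds its value `2p² + 6p` at `x = p + 3`
  nlinarith

theorem guidedCubic_add_three (p : ℝ) : guidedCubic p (p + 3) = -4 := by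
  unfold guidedCubic; ring

theorem guidedCubic_add_four (p : ℝ) : guidedCubic p (p + 4) = 2 * p ^ 2 + 9 * p := by
  unfold guidedCubic; ring

theorem existsUnique_guidedCubic_eq_zero {p : ℝ} (hp : 0 ≤ p) :
    ∃! x, x ∈ Icc (p + 3) (p + 4) ∧ guidedCubic p x = 0 :=
  existsUnique_eq_of_strictMonoOn_Icc (by linarith) (continuous_guidedCubic p).continuousOn
    ((strictMonoOn_guidedCubic hp).mono Icc_subset_Ici_self)
    (by rw [guidedCubic_add_three]; norm_num) (by rw [guidedCubic_add_four]; positivity)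

/-- For every natural `p ≥ 1`, the cubic `h(λ) = λ³ − 6λ² + (9 − p²)λ − 4` has exactly
one real root in `[p+3, p+4]`; in particular `h(p+3) = −4 < 0` and
`h(p+4) = 2p² + 9p > 0`. -/
theorem cubic_unique_root_star_guide (p : ℕ) (hp : 1 ≤ p) :
    (∃! x : ℝ, x ∈ Set.Icc ((p : ℝ) + 3) ((p : ℝ) + 4) ∧
      x ^ 3 - 6 * x ^ 2 + (9 - (p : ℝ) ^ 2) * x - 4 = 0) ∧
    ((p : ℝ) + 3) ^ 3 - 6 * ((p : ℝ) + 3) ^ 2 + (9 - (p : ℝ) ^ 2) * ((p : ℝ) + 3) - 4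
      = -4 ∧ (-4 : ℝ) < 0 ∧
    ((p : ℝ) + 4) ^ 3 - 6 * ((p : ℝ) + 4) ^ 2 + (9 - (p : ℝ) ^ 2) * ((p : ℝ) + 4) - 4
      = 2 * (p : ℝ) ^ 2 + 9 * (p : ℝ) ∧ 0 < 2 * (p : ℝ) ^ 2 + 9 * (p : ℝ) := by
  have hp' : (0 : ℝ) < p := by exact_mod_cast hp
  exact ⟨existsUnique_guidedCubic_eq_zero hp'.le, guidedCubic_add_three p, by norm_num,
    guidedCubic_add_four p, by positivity⟩
end

section
/- For every natural number s ≥ 2, the equation (λ − 4)·(λ − s)² − 4·s²·λ = 0 has exactly one real solution λ in the interval [3s + 1, 3s + 2]; in particular, h(3s+1) = −4s² − 9s − 3 < 0 and h(3s+2) = 4(2s² − s − 2) > 0, where h(λ) = (λ − 4)(λ − s)² − 4s²λ. -/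
/-!
The cubic `h` is strictly increasing on `[3s + 1, ∞)`: its derivative is
`(λ - s)² + 2(λ - 4)(λ - s) - 4s²`, and there `(λ - s)² > 4s²` while `(λ - 4)(λ - s) ≥ 0`.
Since `h(3s + 1) < 0 < h(3s + 2)`, the intermediate value theorem gives a root in
`[3s + 1, 3s + 2]`, and strict monotonicity makes it unique.
-/

open Set

theorem StrictMonoOn.existsUnique_eq_of_Icc {α δ : Type*} [ConditionallyCompleteLinearOrder α]
    [TopologicalSpace α] [OrderTopology α] [DenselyOrdered α] [LinearOrder δ] [TopologicalSpace δ]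
    [OrderClosedTopology δ] {f : α → δ} {a b : α} {c : δ} (hab : a ≤ b)
    (hf : ContinuousOn f (Icc a b)) (hmono : StrictMonoOn f (Icc a b))
    (ha : f a ≤ c) (hb : c ≤ f b) :
    ∃! x : α, x ∈ Icc a b ∧ f x = c := by
  obtain ⟨x, hx, hfx⟩ := intermediate_value_Icc hab hf ⟨ha, hb⟩
  exact ⟨x, ⟨hx, hfx⟩, fun y ⟨hy, hfy⟩ => hmono.injOn hy hx (hfy.trans hfx.symm)⟩

namespace MandarinGuide

/-- The paper's `h`, with `s` real. -/
def edgeCubic (s x : ℝ) : ℝ := (x - 4) * (x - s) ^ 2 - 4 * s ^ 2 * x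

theorem hasDerivAt_edgeCubic (s x : ℝ) :
    HasDerivAt (edgeCubic s) ((x - s) ^ 2 + 2 * (x - 4) * (x - s) - 4 * s ^ 2) x := by
  have h := (((hasDerivAt_id' x).sub_const 4).fun_mul
    (((hasDerivAt_id' x).sub_const s).fun_pow 2)).fun_sub ((hasDerivAt_id' x).const_mul (4 * s ^ 2))
  refine h.congr_deriv ?_
  push_cast
  ring

theorem continuous_edgeCubic (s : ℝ) : Continuous (edgeCubic s) := by
  unfold edgeCubic
  fun_prop

theorem strictMonoOn_edgeCubic {s : ℝ} (hs : 1 ≤ s) :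
    StrictMonoOn (edgeCubic s) (Ici (3 * s + 1)) := by
  refine strictMonoOn_of_deriv_pos (convex_Ici _) (continuous_edgeCubic s).continuousOn ?_
  intro x hx
  rw [interior_Ici, mem_Ioi] at hx
  rw [(hasDerivAt_edgeCubic s x).deriv]
  have hsq : 4 * s ^ 2 < (x - s) ^ 2 := by nlinarith
  have hprod : 0 ≤ (x - 4) * (x - s) := mul_nonneg (by linarith) (by linarith)
  linarith

theorem edgeCubic_three_mul_add_one (s : ℝ) :
    edgeCubic s (3 * s + 1) = -4 * s ^ 2 - 9 * s - 3 := by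
  unfold edgeCubic
  ring

theorem edgeCubic_three_mul_add_two (s : ℝ) :
    edgeCubic s (3 * s + 2) = 4 * (2 * s ^ 2 - s - 2) := by
  unfold edgeCubic
  ring

theorem existsUnique_edgeCubic_eq_zero {s : ℝ} (hs : 2 ≤ s) :
    ∃! x : ℝ, x ∈ Icc (3 * s + 1) (3 * s + 2) ∧ edgeCubic s x = 0 := by
  refine StrictMonoOn.existsUnique_eq_of_Icc (by linarith)
    (continuous_edgeCubic s).continuousOn
    ((strictMonoOn_edgeCubic (by linarith)).mono Icc_subset_Ici_self) ?_ ?_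
  · rw [edgeCubic_three_mul_add_one]
    nlinarith
  · rw [edgeCubic_three_mul_add_two]
    nlinarith

end MandarinGuide

/-- For every natural `s ≥ 2`, the equation `h(λ) = (λ − 4)(λ − s)² − 4s²λ = 0` has
exactly one real root in `[3s+1, 3s+2]`; in particular
`h(3s+1) = −4s² − 9s − 3 < 0` and `h(3s+2) = 4(2s² − s − 2) > 0`. -/
theorem cubic_unique_root_mandarin_guide (s : ℕ) (hs : 2 ≤ s) :
    (∃! x : ℝ, x ∈ Set.Icc (3 * (s : ℝ) + 1) (3 * (s : ℝ) + 2) ∧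
      (x - 4) * (x - (s : ℝ)) ^ 2 - 4 * (s : ℝ) ^ 2 * x = 0) ∧
    (3 * (s : ℝ) + 1 - 4) * (3 * (s : ℝ) + 1 - (s : ℝ)) ^ 2
        - 4 * (s : ℝ) ^ 2 * (3 * (s : ℝ) + 1)
      = -4 * (s : ℝ) ^ 2 - 9 * (s : ℝ) - 3 ∧
    -4 * (s : ℝ) ^ 2 - 9 * (s : ℝ) - 3 < 0 ∧
    (3 * (s : ℝ) + 2 - 4) * (3 * (s : ℝ) + 2 - (s : ℝ)) ^ 2
        - 4 * (s : ℝ) ^ 2 * (3 * (s : ℝ) + 2)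
      = 4 * (2 * (s : ℝ) ^ 2 - (s : ℝ) - 2) ∧
    0 < 4 * (2 * (s : ℝ) ^ 2 - (s : ℝ) - 2) := by
  have hs' : (2 : ℝ) ≤ s := by exact_mod_cast hs
  exact ⟨MandarinGuide.existsUnique_edgeCubic_eq_zero hs',
    MandarinGuide.edgeCubic_three_mul_add_one s, by nlinarith,
    MandarinGuide.edgeCubic_three_mul_add_two s, by nlinarith⟩
end
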